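/- arXiv:1909.09412 — 4 statements merged into one kernel-verified Lean document; each statement's English description precedes it below -/
import Mathlib

section
/- Fix W ∈ {0,1}^T with (1/T)·Σ_t W_t < 1 and vectors ψ_1,…,ψ_T ∈ ℝ^p. For each γ ∈ ℝ^p, the function α ↦ (1/T)·Σ_{t=1}^T ρ_{W_t}(W_t − α − ψ_tᵀγ) has a unique minimizer g(γ) over α ∈ ℝ. Moreover, if ‖ψ_t‖_∞ ≤ K for all t, then γ ↦ g(γ) is Lipschitz continuous with a Lipschitz constant depending only on K, p and T (uniformly over all such W and ψ). -/
/-!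
The loss `ρ_w` is convex and `C¹` with a `2`-Lipschitz derivative whenever `0 ≤ w ≤ 1`, so
the objective `α ↦ Σ_t ρ_{W_t}(W_t − α − c_t)` is minimized exactly at the zeros of its
score `α ↦ Σ_t ρ'_{W_t}(W_t − α − c_t)`. The score is continuous and antitone, changes sign,
and is strictly antitone as soon as some `W_t < 1` (the quadratic part of `ρ_{W_t}` survives),
which gives a unique minimizer. Shifting every `c_t` by at most `δ` moves the zero of the
score by at most `δ`, and `|ψ_tᵀ(γ₁ − γ₂)| ≤ p K ‖γ₁ − γ₂‖_∞`.
-/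

open scoped BigOperators

/-- The loss `ρ_z(x) = x²·(1−z) + (max(x,0))²·z`. -/
noncomputable def drRho (z x : ℝ) : ℝ := x ^ 2 * (1 - z) + (max x 0) ^ 2 * z

open Finset

noncomputable def drRhoDeriv (w x : ℝ) : ℝ := 2 * x * (1 - w) + 2 * max x 0 * w

lemma max_zero_sq_add_le (x y : ℝ) :
    max x 0 ^ 2 + 2 * max x 0 * (y - x) ≤ max y 0 ^ 2 := by
  rcases le_total x 0 with hx | hx <;> rcases le_total y 0 with hy | hy <;>
    simp only [max_eq_left, max_eq_right, hx, hy] <;> nlinarith [sq_nonneg (y - x)]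

lemma max_zero_sq_le (x y : ℝ) :
    max y 0 ^ 2 ≤ max x 0 ^ 2 + 2 * max x 0 * (y - x) + (y - x) ^ 2 := by
  rcases le_total x 0 with hx | hx <;> rcases le_total y 0 with hy | hy <;>
    simp only [max_eq_left, max_eq_right, hx, hy] <;> nlinarith

section Loss

variable {w : ℝ}

lemma drRho_add_deriv_mul_le (hw₀ : 0 ≤ w) (hw₁ : w ≤ 1) (x y : ℝ) :
    drRho w x + drRhoDeriv w x * (y - x) ≤ drRho w y := by
  unfold drRho drRhoDeriv
  nlinarith [mul_nonneg (sub_nonneg.2 hw₁) (sq_nonneg (y - x)),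
    mul_le_mul_of_nonneg_left (max_zero_sq_add_le x y) hw₀]

lemma drRho_le_add_deriv_mul_add_sq (hw₀ : 0 ≤ w) (x y : ℝ) :
    drRho w y ≤ drRho w x + drRhoDeriv w x * (y - x) + (y - x) ^ 2 := by
  unfold drRho drRhoDeriv
  nlinarith [mul_nonneg hw₀ (sq_nonneg (y - x)),
    mul_le_mul_of_nonneg_left (max_zero_sq_le x y) hw₀]

lemma drRhoDeriv_monotone (hw₀ : 0 ≤ w) (hw₁ : w ≤ 1) : Monotone (drRhoDeriv w) := by
  intro x y hxy
  have : max x 0 ≤ max y 0 := max_le_max_right 0 hxy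
  unfold drRhoDeriv
  nlinarith [mul_le_mul_of_nonneg_right hxy (sub_nonneg.2 hw₁)]

lemma drRhoDeriv_strictMono (hw₀ : 0 ≤ w) (hw₁ : w < 1) : StrictMono (drRhoDeriv w) := by
  intro x y hxy
  have : max x 0 ≤ max y 0 := max_le_max_right 0 hxy.le
  unfold drRhoDeriv
  nlinarith [mul_lt_mul_of_pos_right hxy (sub_pos.2 hw₁)]

lemma drRhoDeriv_apply_zero (w : ℝ) : drRhoDeriv w 0 = 0 := by
  simp [drRhoDeriv]

lemma continuous_drRhoDeriv (w : ℝ) : Continuous (drRhoDeriv w) := by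
  unfold drRhoDeriv
  fun_prop

end Loss

lemma eq_zero_of_forall_mul_add_sq_nonneg {a b : ℝ} (hb : 0 ≤ b)
    (h : ∀ s, 0 ≤ a * s + b * s ^ 2) : a = 0 := by
  -- at `s = -a / (b + 1)` the right-hand side is `-a² / (b + 1)²`
  have hs := h (-a / (b + 1))
  have hb1 : 0 < b + 1 := by linarith
  field_simp at hs
  nlinarith [sq_nonneg a]

section Profile

variable {ι : Type*} [Fintype ι] (W c : ι → ℝ)

noncomputable def profiledLoss (α : ℝ) : ℝ := ∑ t, drRho (W t) (W t - α - c t)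

noncomputable def profiledScore (α : ℝ) : ℝ := ∑ t, drRhoDeriv (W t) (W t - α - c t)

variable {W} (hW : ∀ t, W t ∈ Set.Icc (0 : ℝ) 1)
include hW

lemma profiledLoss_sub_score_mul_le (α α' : ℝ) :
    profiledLoss W c α - profiledScore W c α * (α' - α) ≤ profiledLoss W c α' := by
  unfold profiledLoss profiledScore
  rw [sum_mul, ← sum_sub_distrib]
  refine sum_le_sum fun t _ => ?_
  have := drRho_add_deriv_mul_le (hW t).1 (hW t).2 (W t - α - c t) (W t - α' - c t)
  linarith

lemma profiledLoss_le_sub_score_mul_add_sq (α α' : ℝ) :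
    profiledLoss W c α' ≤
      profiledLoss W c α - profiledScore W c α * (α' - α) + Fintype.card ι * (α' - α) ^ 2 := by
  unfold profiledLoss profiledScore
  rw [sum_mul, ← sum_sub_distrib, ← nsmul_eq_mul, ← card_univ, ← sum_const, ← sum_add_distrib]
  refine sum_le_sum fun t _ => ?_
  have := drRho_le_add_deriv_mul_add_sq (hW t).1 (W t - α - c t) (W t - α' - c t)
  linarith

lemma isMinimizer_iff_profiledScore_eq_zero (α : ℝ) :
    (∀ α', profiledLoss W c α ≤ profiledLoss W c α') ↔ profiledScore W c α = 0 := by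
  refine ⟨fun hmin => ?_, fun hzero α' => ?_⟩
  · refine eq_zero_of_forall_mul_add_sq_nonneg (Nat.cast_nonneg (Fintype.card ι)) fun s => ?_
    have := profiledLoss_le_sub_score_mul_add_sq c hW α (α - s)
    have := hmin (α - s)
    nlinarith
  · simpa [hzero] using profiledLoss_sub_score_mul_le c hW α α'

lemma profiledScore_strictAnti {t₀ : ι} (ht₀ : W t₀ < 1) : StrictAnti (profiledScore W c) :=
  fun α β hαβ => sum_lt_sum (fun t _ => drRhoDeriv_monotone (hW t).1 (hW t).2 (by linarith))
    ⟨t₀, mem_univ _, drRhoDeriv_strictMono (hW t₀).1 ht₀ (by linarith)⟩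

omit hW in
lemma continuous_profiledScore : Continuous (profiledScore W c) :=
  continuous_finsetSum _ fun t _ => (continuous_drRhoDeriv (W t)).comp (by fun_prop)

lemma exists_profiledScore_eq_zero : ∃ α, profiledScore W c α = 0 := by
  set M := ∑ t, |W t - c t|
  have hM : ∀ t, |W t - c t| ≤ M := fun t =>
    single_le_sum (f := fun t => |W t - c t|) (fun _ _ => abs_nonneg _) (mem_univ t)
  have hneg : profiledScore W c M ≤ 0 := sum_nonpos fun t _ => by
    rw [← drRhoDeriv_apply_zero (W t)]
    exact drRhoDeriv_monotone (hW t).1 (hW t).2 (by linarith [le_abs_self (W t - c t), hM t])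
  have hpos : 0 ≤ profiledScore W c (-M) := sum_nonneg fun t _ => by
    rw [← drRhoDeriv_apply_zero (W t)]
    exact drRhoDeriv_monotone (hW t).1 (hW t).2 (by linarith [neg_abs_le (W t - c t), hM t])
  have hM₀ : 0 ≤ M := sum_nonneg fun t _ => abs_nonneg (W t - c t)
  obtain ⟨α, -, hα⟩ := intermediate_value_Icc' (by linarith : -M ≤ M)
    (continuous_profiledScore c).continuousOn ⟨hneg, hpos⟩
  exact ⟨α, hα⟩

lemma existsUnique_isMinimizer {t₀ : ι} (ht₀ : W t₀ < 1) :
    ∃! α, ∀ α', profiledLoss W c α ≤ profiledLoss W c α' := by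
  simp_rw [isMinimizer_iff_profiledScore_eq_zero c hW]
  obtain ⟨α, hα⟩ := exists_profiledScore_eq_zero c hW
  exact ⟨α, hα, fun β hβ => (profiledScore_strictAnti c hW ht₀).injective (hβ.trans hα.symm)⟩

omit c in
lemma sub_le_of_profiledScore_eq_zero {t₀ : ι} (ht₀ : W t₀ < 1) {c₁ c₂ : ι → ℝ} {δ α₁ α₂ : ℝ}
    (hc : ∀ t, c₂ t ≤ c₁ t + δ) (h₁ : profiledScore W c₁ α₁ = 0)
    (h₂ : profiledScore W c₂ α₂ = 0) : α₁ - δ ≤ α₂ := by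
  have : profiledScore W c₂ α₂ ≤ profiledScore W c₂ (α₁ - δ) := h₂ ▸ h₁ ▸
    sum_le_sum fun t _ => drRhoDeriv_monotone (hW t).1 (hW t).2 (by linarith [hc t])
  exact (profiledScore_strictAnti c₂ hW ht₀).le_iff_ge.1 this

omit c in
lemma abs_sub_le_of_profiledScore_eq_zero {t₀ : ι} (ht₀ : W t₀ < 1) {c₁ c₂ : ι → ℝ}
    {δ α₁ α₂ : ℝ} (hc : ∀ t, |c₁ t - c₂ t| ≤ δ) (h₁ : profiledScore W c₁ α₁ = 0)
    (h₂ : profiledScore W c₂ α₂ = 0) : |α₁ - α₂| ≤ δ :=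
  abs_sub_le_iff.2
    ⟨sub_le_comm.1 <| sub_le_of_profiledScore_eq_zero hW ht₀
        (fun t => by linarith [(abs_le.1 (hc t)).1]) h₁ h₂,
      sub_le_comm.1 <| sub_le_of_profiledScore_eq_zero hW ht₀
        (fun t => by linarith [(abs_le.1 (hc t)).2]) h₂ h₁⟩

end Profile

lemma abs_sum_mul_le {κ : Type*} [Fintype κ] {a : κ → ℝ} {K : ℝ} (ha : ∀ j, |a j| ≤ K)
    (x : κ → ℝ) : |∑ j, a j * x j| ≤ K * Fintype.card κ * ‖x‖ := calc
  |∑ j, a j * x j| ≤ ∑ j, |a j| * |x j| := by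
    simpa only [abs_mul] using abs_sum_le_sum_abs (fun j => a j * x j) univ
  _ ≤ ∑ _j : κ, K * ‖x‖ := sum_le_sum fun j _ =>
    mul_le_mul (ha j) (norm_le_pi_norm x j) (abs_nonneg _) ((abs_nonneg _).trans (ha j))
  _ = K * Fintype.card κ * ‖x‖ := by simp only [sum_const, card_univ, nsmul_eq_mul]; ring

lemma exists_lt_one_of_mean_lt_one {T : ℕ} (hT : 0 < T) {W : Fin T → ℝ}
    (h : 1 / (T : ℝ) * ∑ t, W t < 1) : ∃ t, W t < 1 := by
  by_contra! hW
  have : (T : ℝ) ≤ ∑ t, W t := by simpa using sum_le_sum fun t (_ : t ∈ univ) => hW t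
  rw [one_div_mul_eq_div, div_lt_one (by positivity)] at h
  linarith

/-- **Lemma 2 (Properties of the profiled intercept).**
Fix `W ∈ {0,1}^T` with `(1/T)·Σ_t W_t < 1` and `ψ_1,…,ψ_T ∈ ℝ^p`.  For each
`γ ∈ ℝ^p` the function `α ↦ (1/T)·Σ_t ρ_{W_t}(W_t − α − ψ_tᵀγ)` has a unique
minimizer `g(γ)`.  Moreover, if `‖ψ_t‖_∞ ≤ K` for all `t`, then `g` is
Lipschitz, with a Lipschitz constant depending only on `K`, `p` and `T`
(uniformly over all such `W` and `ψ`). -/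
theorem profiled_intercept_unique_and_lipschitz
    (T p : ℕ) (hT : 0 < T) (K : ℝ) (hK : 0 < K) :
    -- for every W with mean < 1 and every ψ, γ: a unique minimizer exists
    (∀ (W : Fin T → ℝ), (∀ t, W t = 0 ∨ W t = 1) →
      (1 / (T : ℝ)) * ∑ t, W t < 1 →
      ∀ (ψ : Fin T → Fin p → ℝ) (γ : Fin p → ℝ),
        ∃! α : ℝ, ∀ α' : ℝ,
          (1 / (T : ℝ)) * ∑ t, drRho (W t) (W t - α - ∑ j, ψ t j * γ j)
            ≤ (1 / (T : ℝ)) * ∑ t, drRho (W t) (W t - α' - ∑ j, ψ t j * γ j)) ∧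
    -- a uniform Lipschitz constant depending only on K, p and T
    (∃ C : ℝ, 0 ≤ C ∧
      ∀ (W : Fin T → ℝ), (∀ t, W t = 0 ∨ W t = 1) →
      (1 / (T : ℝ)) * ∑ t, W t < 1 →
      ∀ (ψ : Fin T → Fin p → ℝ), (∀ t j, |ψ t j| ≤ K) →
      ∀ g : (Fin p → ℝ) → ℝ,
        (∀ (γ : Fin p → ℝ) (α' : ℝ),
          (1 / (T : ℝ)) * ∑ t, drRho (W t) (W t - g γ - ∑ j, ψ t j * γ j)
            ≤ (1 / (T : ℝ)) * ∑ t, drRho (W t) (W t - α' - ∑ j, ψ t j * γ j)) →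
        ∀ γ₁ γ₂ : Fin p → ℝ, |g γ₁ - g γ₂| ≤ C * ‖γ₁ - γ₂‖) := by
  have hT' : (0 : ℝ) < 1 / T := by positivity
  have mem_Icc {W : Fin T → ℝ} (hW : ∀ t, W t = 0 ∨ W t = 1) (t : Fin T) :
      W t ∈ Set.Icc (0 : ℝ) 1 := by
    rcases hW t with h | h <;> simp [h]
  simp_rw [mul_le_mul_iff_of_pos_left hT']
  refine ⟨fun W hW hmean ψ γ => ?_, K * p, by positivity, fun W hW hmean ψ hψ g hg γ₁ γ₂ => ?_⟩
  · obtain ⟨t₀, ht₀⟩ := exists_lt_one_of_mean_lt_one hT hmean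
    exact existsUnique_isMinimizer _ (mem_Icc hW) ht₀
  · obtain ⟨t₀, ht₀⟩ := exists_lt_one_of_mean_lt_one hT hmean
    have root (γ : Fin p → ℝ) := (isMinimizer_iff_profiledScore_eq_zero _ (mem_Icc hW) _).1 (hg γ)
    refine abs_sub_le_of_profiledScore_eq_zero (mem_Icc hW) ht₀ (fun t => ?_) (root γ₁) (root γ₂)
    simpa [← sum_sub_distrib, ← mul_sub] using abs_sum_mul_le (hψ t) (γ₁ - γ₂)
end

section
/- Fix W ∈ {0,1}^T with m := Σ_t W_t < T, vectors ψ_1,…,ψ_T ∈ ℝ^p, and γ ∈ ℝ^p. Set h_t := W_t − ψ_tᵀγ, let h̃_(1) ≥ h̃_(2) ≥ … ≥ h̃_(m) be the decreasing rearrangement of {h_t : W_t = 1}, set h̃_(0) := 0, and for k = 0,1,…,m define g_k := (Σ_{t : W_t = 0} h_t + Σ_{l=1}^k h̃_(l)) / ((T − m) + k). Then the unique minimizer g of α ↦ Σ_{t=1}^T ρ_{W_t}(W_t − α − ψ_tᵀγ) over α ∈ ℝ satisfies g = g_0 + Σ_{l=1}^m 1{h̃_(l) ≥ g_{l−1}}·(g_l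 − g_{l−1}). -/
open scoped BigOperators

lemma aux_max_sq (a d : ℝ) : (max a 0)^2 + 2 * (max a 0) * d ≤ (max (a + d) 0)^2 := by
  rcases le_total a 0 with ha|ha
  · rw [max_eq_right ha]; simp [sq_nonneg (max (a+d) 0)]
  · rw [max_eq_left ha]
    rcases le_total (a+d) 0 with hb|hb
    · rw [max_eq_right hb]; nlinarith
    · rw [max_eq_left hb]; nlinarith [sq_nonneg d]

lemma drRho_quad (b : Bool) (x α β : ℝ) :
    drRho (if b then 1 else 0) (x - α) + 2 * (if b then max (x-α) 0 else (x-α)) * (α - β)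
      + (if b then 0 else (α-β)^2) ≤ drRho (if b then 1 else 0) (x - β) := by
  cases b
  · simp only [drRho, Bool.false_eq_true, if_false]
    exact le_of_eq (by ring)
  · simp only [drRho, if_true]
    have hx : x - β = (x - α) + (α - β) := by ring
    rw [hx]
    have := aux_max_sq (x - α) (α - β)
    nlinarith

lemma sum_fin_ite (mm K : ℕ) (hK : K ≤ mm) (d : ℕ → ℝ) :
    (∑ l : Fin mm, if (l : ℕ) < K then d (l : ℕ) else 0) = ∑ k ∈ Finset.range K, d k := by
  rw [Fin.sum_univ_eq_sum_range (fun k => if k < K then d k else 0) mm]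
  rw [← Finset.sum_subset (Finset.range_subset_range.2 hK) (by intro k hk1 hk2; simp_all)]
  exact Finset.sum_congr rfl (by intro k hk; simp_all)

/-- **Explicit formula for the profiled intercept.**
Fix `W ∈ {0,1}^T` with `m = Σ_t W_t < T`, `ψ_1,…,ψ_T ∈ ℝ^p` and `γ ∈ ℝ^p`.
With `h_t = W_t − ψ_tᵀγ`, let `h̃_(1) ≥ … ≥ h̃_(m)` be the decreasing
rearrangement of `{h_t : W_t = 1}` (given by an enumeration `e` of the treated
periods along which `h` is antitone), `h̃_(0) = 0`, and
`g_k = (Σ_{t: W_t=0} h_t + Σ_{l≤k} h̃_(l)) / ((T−m)+k)`.  Then the unique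
minimizer `g` of `α ↦ Σ_t ρ_{W_t}(W_t − α − ψ_tᵀγ)` satisfies
`g = g_0 + Σ_{l=1}^m 1{h̃_(l) ≥ g_{l−1}}·(g_l − g_{l−1})`. -/
theorem profiled_intercept_formula
    (T p : ℕ) (hT : 0 < T)
    (W : Fin T → Bool)
    (m : ℕ) (hm : m = (Finset.univ.filter (fun t => W t = true)).card)
    (hmT : m < T)
    (ψ : Fin T → Fin p → ℝ) (γ : Fin p → ℝ)
    -- h_t = W_t − ψ_tᵀγ
    (h : Fin T → ℝ)
    (hhdef : ∀ t, h t = (if W t then (1 : ℝ) else 0) - ∑ j, ψ t j * γ j)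
    -- the decreasing enumeration of {h_t : W_t = 1}
    (e : Fin m → Fin T)
    (hinj : Function.Injective e)
    (hrange : ∀ l, W (e l) = true)
    (honto : ∀ t, W t = true → ∃ l, e l = t)
    (hdec : Antitone (fun l => h (e l))) :
    let gk : ℕ → ℝ := fun k =>
      ((∑ t ∈ Finset.univ.filter (fun t => W t = false), h t) +
        ∑ l : Fin m, (if (l : ℕ) < k then h (e l) else 0)) / ((T : ℝ) - m + k)
    let f : ℝ → ℝ := fun α =>
      ∑ t, drRho (if W t then (1 : ℝ) else 0) ((if W t then (1 : ℝ) else 0) - α - ∑ j, ψ t j * γ j)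
    (∃ α : ℝ, ∀ α' : ℝ, f α ≤ f α') ∧
      ∀ α : ℝ, (∀ α' : ℝ, f α ≤ f α') →
        α = gk 0 + ∑ l : Fin m,
          (if gk (l : ℕ) ≤ h (e l) then gk ((l : ℕ) + 1) - gk (l : ℕ) else 0) := by
    classical
  intro gk f
  -- notation
  set S0 : ℝ := ∑ t ∈ Finset.univ.filter (fun t => W t = false), h t with hS0
  set n : ℝ := (T : ℝ) - m with hn
  have hmleT : m ≤ T := hmT.le
  have hn1 : (1:ℝ) ≤ n := by
    rw [hn]
    have : (m:ℝ) + 1 ≤ (T:ℝ) := by exact_mod_cast hmT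
    linarith
  have hden : ∀ k : ℕ, (0:ℝ) < n + k := by
    intro k
    have : (0:ℝ) ≤ (k:ℝ) := Nat.cast_nonneg k
    linarith
  have hgk : ∀ k, gk k = (S0 + ∑ l : Fin m, (if (l : ℕ) < k then h (e l) else 0)) / (n + k) := by
    intro k; rfl
  -- cardinality of control set
  have hcard0 : ((Finset.univ.filter (fun t => W t = false)).card : ℝ) = n := by
    have hsplit := Finset.card_filter_add_card_filter_not
      (s := (Finset.univ : Finset (Fin T))) (p := fun t => W t = true)
    simp only [Finset.card_univ, Fintype.card_fin] at hsplit
    have h2 : (Finset.univ.filter (fun t => ¬ W t = true)) =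
        (Finset.univ.filter (fun t => W t = false)) := by
      apply Finset.filter_congr; intro t _; simp
    rw [h2] at hsplit
    have : (Finset.univ.filter (fun t => W t = false)).card = T - m := by omega
    rw [this, hn]
    have : (m:ℝ) ≤ (T:ℝ) := by exact_mod_cast hmleT
    push_cast [Nat.cast_sub hmleT]
    ring
  -- sum over treated = sum over Fin m
  have hsum_treated : ∀ F : Fin T → ℝ,
      (∑ t ∈ Finset.univ.filter (fun t => W t = true), F t) = ∑ l : Fin m, F (e l) := by
    intro F
    refine (Finset.sum_bij (fun l _ => e l) ?_ ?_ ?_ ?_).symm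
    · intro l _; simp [hrange l]
    · intro a _ b _ hab; exact hinj hab
    · intro t ht; simp only [Finset.mem_filter] at ht
      obtain ⟨l, hl⟩ := honto t ht.2
      exact ⟨l, Finset.mem_univ l, hl⟩
    · intro l _; rfl
  -- f in terms of h
  have hf : ∀ α, f α = ∑ t, drRho (if W t then (1:ℝ) else 0) (h t - α) := by
    intro α
    apply Finset.sum_congr rfl
    intro t _
    congr 1
    rw [hhdef t]; ring
  have hfalse : (Finset.univ.filter (fun t => ¬ W t = true)) =
      (Finset.univ.filter (fun t => W t = false)) := by
    apply Finset.filter_congr; intro t _; simp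
  -- the subgradient-type function φ
  set φ : ℝ → ℝ := fun α => ∑ t, (if W t then max (h t - α) 0 else h t - α) with hφdef
  -- quadratic lower bound
  have hquad : ∀ α β : ℝ, f α + 2 * (φ α) * (α - β) + n * (α - β)^2 ≤ f β := by
    intro α β
    rw [hf α, hf β]
    simp only [hφdef]
    have h1 : (2 * ∑ t, (if W t then max (h t - α) 0 else h t - α)) * (α - β)
        = ∑ t, 2 * (if W t then max (h t - α) 0 else h t - α) * (α - β) := by
      rw [Finset.mul_sum, Finset.sum_mul]
    have h2 : n * (α - β)^2 = ∑ t : Fin T, (if W t then 0 else (α - β)^2) := by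
      rw [Finset.sum_ite, Finset.sum_const, Finset.sum_const, hfalse]
      simp only [smul_zero, zero_add, nsmul_eq_mul]
      rw [hcard0]
    rw [h1, h2, ← Finset.sum_add_distrib, ← Finset.sum_add_distrib]
    refine Finset.sum_le_sum (fun t _ => ?_)
    have := drRho_quad (W t) (h t) α β
    nlinarith [this]
  -- explicit formula for φ
  have hφ : ∀ α, φ α = S0 - n * α + ∑ l : Fin m, max (h (e l) - α) 0 := by
    intro α
    simp only [hφdef]
    rw [Finset.sum_ite, hfalse, Finset.sum_sub_distrib, Finset.sum_const, nsmul_eq_mul,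
      hcard0, hsum_treated (fun t => max (h t - α) 0)]
    ring
  -- extended treated sequence
  set H : ℕ → ℝ := fun k => if hk : k < m then h (e ⟨k, hk⟩) else 0 with hH
  have hHl : ∀ l : Fin m, H (l:ℕ) = h (e l) := by
    intro l; simp only [hH, dif_pos l.isLt]
  have hHanti : ∀ j k : ℕ, j ≤ k → k < m → H k ≤ H j := by
    intro j k hjk hk
    have hj : j < m := lt_of_le_of_lt hjk hk
    simp only [hH, dif_pos hj, dif_pos hk]
    exact hdec (show (⟨j, hj⟩ : Fin m) ≤ ⟨k, hk⟩ from hjk)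
  -- numerator identity
  have hgknum : ∀ k : ℕ, k ≤ m → gk k * (n + k) = S0 + ∑ j ∈ Finset.range k, H j := by
    intro k hk
    rw [hgk k, div_mul_cancel₀ _ (ne_of_gt (hden k))]
    congr 1
    rw [← sum_fin_ite m k hk H]
    exact Finset.sum_congr rfl (fun l _ => by rw [hHl l])
  have hrec : ∀ k, k < m → gk (k+1) * (n + k + 1) = gk k * (n + k) + H k := by
    intro k hk
    have h1 := hgknum (k+1) hk
    have h2 := hgknum k hk.le
    rw [Finset.sum_range_succ] at h1
    push_cast at h1
    linarith
  have hstepup : ∀ k, k < m → gk k ≤ H k → gk (k+1) ≤ H k := by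
    intro k hk hle
    have h1 := hrec k hk
    have h2 := hden k
    nlinarith [mul_nonneg (sub_nonneg.2 hle) h2.le]
  have hstepdown : ∀ k, k < m → H k < gk k → H k < gk (k+1) := by
    intro k hk hlt
    have h1 := hrec k hk
    have h2 := hden k
    nlinarith [mul_pos (sub_pos.2 hlt) h2]
  -- the critical index K
  have hexists : ∃ k, ¬ (k < m ∧ gk k ≤ H k) := ⟨m, by simp⟩
  set K := Nat.find hexists with hKdef
  have hKspec : ¬ (K < m ∧ gk K ≤ H K) := Nat.find_spec hexists
  have hKmin : ∀ j, j < K → j < m ∧ gk j ≤ H j := by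
    intro j hj
    have := Nat.find_min hexists hj
    tauto
  have hKm : K ≤ m := Nat.find_le (by simp)
  -- below K the running mean stays below the order statistics
  have ha : ∀ j, j < K → gk K ≤ H j := by
    intro j hj
    have hK1 : 1 ≤ K := by omega
    obtain ⟨hKm', hle⟩ := hKmin (K-1) (by omega)
    have h1 : gk K ≤ H (K-1) := by
      have := hstepup (K-1) hKm' hle
      rwa [Nat.sub_add_cancel hK1] at this
    exact le_trans h1 (hHanti j (K-1) (by omega) hKm')
  -- at and above K the condition fails
  have hb : ∀ j, K ≤ j → j < m → H j < gk j := by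
    intro j hj
    induction j, hj using Nat.le_induction with
    | base =>
      intro hKm'
      by_contra hc
      push_neg at hc
      exact hKspec ⟨hKm', hc⟩
    | succ j hj ih =>
      intro hjm
      have hjm' : j < m := by omega
      have h1 : H j < gk j := ih hjm'
      have h2 : H j < gk (j+1) := hstepdown j hjm' h1
      exact lt_of_le_of_lt (hHanti j (j+1) (Nat.le_succ j) hjm) h2
  have hb' : ∀ j, K ≤ j → j < m → H j < gk K := by
    intro j hj hjm
    have hKm' : K < m := by omega
    exact lt_of_le_of_lt (hHanti K j hj hjm) (hb K le_rfl hKm')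
  -- the first-order condition holds at gk K
  have hzero : φ (gk K) = 0 := by
    rw [hφ]
    have hmax : (∑ l : Fin m, max (h (e l) - gk K) 0)
        = ∑ l : Fin m, (if (l:ℕ) < K then H (l:ℕ) - gk K else 0) := by
      apply Finset.sum_congr rfl
      intro l _
      rw [← hHl l]
      by_cases hc : (l:ℕ) < K
      · rw [if_pos hc, max_eq_left (by linarith [ha (l:ℕ) hc])]
      · push_neg at hc
        rw [if_neg (not_lt.2 hc), max_eq_right (by linarith [hb' (l:ℕ) hc l.isLt])]
    rw [hmax, sum_fin_ite m K hKm (fun k => H k - gk K), Finset.sum_sub_distrib,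
      Finset.sum_const, nsmul_eq_mul, Finset.card_range]
    have := hgknum K hKm
    linarith
  -- telescoping identity for the right-hand side
  have htel : gk 0 + (∑ l : Fin m,
      (if gk (l:ℕ) ≤ h (e l) then gk ((l:ℕ)+1) - gk (l:ℕ) else 0)) = gk K := by
    have h1 : (∑ l : Fin m, (if gk (l:ℕ) ≤ h (e l) then gk ((l:ℕ)+1) - gk (l:ℕ) else 0))
        = ∑ l : Fin m, (if (l:ℕ) < K then gk ((l:ℕ)+1) - gk (l:ℕ) else 0) := by
      apply Finset.sum_congr rfl
      intro l _
      rw [← hHl l]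
      by_cases hc : (l:ℕ) < K
      · rw [if_pos (hKmin _ hc).2, if_pos hc]
      · push_neg at hc
        rw [if_neg (not_le.2 (hb (l:ℕ) hc l.isLt)), if_neg (not_lt.2 hc)]
    rw [h1, sum_fin_ite m K hKm (fun k => gk (k+1) - gk k), Finset.sum_range_sub]
    ring
  -- conclusion
  have hminK : ∀ β, f (gk K) ≤ f β := by
    intro β
    have hq := hquad (gk K) β
    rw [hzero] at hq
    nlinarith [sq_nonneg (gk K - β)]
  refine ⟨⟨gk K, hminK⟩, ?_⟩
  intro α hα
  have h1 := hα (gk K)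
  have h2 := hquad (gk K) α
  rw [hzero] at h2
  have h5 : gk K = α := by nlinarith [sq_nonneg (gk K - α)]
  rw [← h5, ← htel]
end

section
/- Let (W, X) be distributed according to 𝒫 with W ∈ {0,1}^T, let S = S(W, X) be a statistic such that W̄ := (1/T)·Σ_t W_t is measurable with respect to σ(S, X), and suppose E[W_t | S, X] ≤ 1 − η almost surely for all t, for some η > 0, and that the functions ψ_t := ψ(X, S, t) ∈ ℝ^p are bounded and measurable. Then there exist a σ(W, X)-measurable random variable α* and a vector γ* ∈ ℝ^p such that, with ξ_t := W_t − α* − ψ_tᵀγ* and m_t := 1 − W_t·1{ξ_t ≤ 0}, the following hold: E[Σ_{t=1}^T ξ_t ψ_t m_t] = 0 (in ℝ^p), and Σ_{t=1}^T ξ_t m_t = 0 almost surely. -/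
/-!
For `w ∈ {0,1}`, `balanceResid w u = (w - u)(1 - w·1{w ≤ u})` is minus the derivative of the
convex loss `balanceLoss w` (`u²/2` if `w = 0`, `(1 - u)₊²/2` if `w = 1`), and `ξ_t m_t` is
`balanceResid W_t (α + ψ_tᵀγ)`. For fixed `γ`, a minimiser `α*` of `α ↦ Σ_t balanceLoss` makes
`Σ_t ξ_t m_t` vanish identically; `γ*` minimises the convex profile
`V γ = E[min_α Σ_t balanceLoss]`, whose first-order conditions are the moment equations.
`V` attains its minimum because every direction `d` along which it stays bounded leaves `ψ_tᵀd`
a.s. constant in `t`, hence is a direction of constancy: otherwise the loss grows quadratically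
on the event where an untreated unit has the larger score, and overlap forbids that
`σ(S, X)`-event to be almost surely treated.
-/

open MeasureTheory Set Filter Topology Matrix
open scoped BigOperators

noncomputable def balanceResid (w u : ℝ) : ℝ := (w - u) * (1 - w * if w - u ≤ 0 then 1 else 0)

noncomputable def balanceLoss (w u : ℝ) : ℝ := (1 - w) * (u ^ 2 / 2) + w * (max (1 - u) 0 ^ 2 / 2)

section Scalar

@[simp] lemma balanceResid_zero (u : ℝ) : balanceResid 0 u = -u := by simp [balanceResid]

@[simp] lemma balanceResid_one (u : ℝ) : balanceResid 1 u = max (1 - u) 0 := by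
  rcases le_or_gt (1 - u) 0 with h | h
  · simp [balanceResid, h]
  · simp [balanceResid, h.not_ge, h.le]

@[simp] lemma balanceLoss_zero (u : ℝ) : balanceLoss 0 u = u ^ 2 / 2 := by simp [balanceLoss]

@[simp] lemma balanceLoss_one (u : ℝ) : balanceLoss 1 u = max (1 - u) 0 ^ 2 / 2 := by
  simp [balanceLoss]

lemma measurable_balanceResid : Measurable (Function.uncurry balanceResid) := by
  unfold Function.uncurry balanceResid
  exact (measurable_fst.sub measurable_snd).mul (measurable_const.sub (measurable_fst.mul
    (Measurable.ite (measurableSet_le (measurable_fst.sub measurable_snd) measurable_const)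
      measurable_const measurable_const)))

lemma continuous_balanceLoss : Continuous (Function.uncurry balanceLoss) := by
  unfold Function.uncurry balanceLoss
  fun_prop

variable {w : ℝ} (hw : w = 0 ∨ w = 1)
include hw

lemma continuous_balanceResid : Continuous (balanceResid w) := by
  rcases hw with rfl | rfl
  · rw [show balanceResid 0 = fun u => -u from funext balanceResid_zero]; fun_prop
  · rw [show balanceResid 1 = fun u => max (1 - u) 0 from funext balanceResid_one]; fun_prop

lemma balanceResid_antitone : Antitone (balanceResid w) := by
  intro u u' h
  rcases hw with rfl | rfl
  · simpa using h
  · simp only [balanceResid_one]; exact max_le_max (by linarith) le_rfl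

lemma abs_balanceResid_le (u : ℝ) : |balanceResid w u| ≤ 1 + |u| := by
  rcases hw with rfl | rfl
  · simp
  · rw [balanceResid_one, abs_of_nonneg (le_max_right _ _)]
    exact max_le (by linarith [neg_abs_le u]) (by positivity)

lemma balanceLoss_nonneg (u : ℝ) : 0 ≤ balanceLoss w u := by
  rcases hw with rfl | rfl <;> simp only [balanceLoss_zero, balanceLoss_one] <;> positivity

lemma balanceLoss_le (u : ℝ) : balanceLoss w u ≤ (1 + |u|) ^ 2 / 2 := by
  have h0 : 0 ≤ max (1 - u) 0 := le_max_right _ _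
  have h1 : max (1 - u) 0 ≤ 1 + |u| := max_le (by linarith [neg_abs_le u]) (by positivity)
  rcases hw with rfl | rfl
  · rw [balanceLoss_zero, ← sq_abs u]; gcongr; linarith
  · rw [balanceLoss_one]; gcongr

lemma balanceLoss_sub_le (u u' : ℝ) :
    balanceLoss w u - balanceResid w u * (u' - u) ≤ balanceLoss w u' := by
  rcases hw with rfl | rfl
  · simp only [balanceLoss_zero, balanceResid_zero]; nlinarith [sq_nonneg (u' - u)]
  · simp only [balanceLoss_one, balanceResid_one]
    have := le_max_left (1 - u') 0
    have := le_max_right (1 - u') 0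
    rcases le_or_gt (1 - u) 0 with h | h
    · rw [max_eq_right h]; nlinarith
    · rw [max_eq_left h.le]; nlinarith [sq_nonneg (max (1 - u') 0 - (1 - u))]

/-- The subgradient `-balanceResid w` is `1`-Lipschitz, whence the quadratic upper bound. -/
lemma balanceLoss_add_le (u δ : ℝ) :
    balanceLoss w (u + δ) ≤ balanceLoss w u - balanceResid w u * δ + δ ^ 2 / 2 := by
  rcases hw with rfl | rfl
  · simp only [balanceLoss_zero, balanceResid_zero]; nlinarith
  · simp only [balanceLoss_one, balanceResid_one]
    have h1 := le_max_left (1 - u) 0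
    have h0 := le_max_right (1 - u) 0
    rcases max_cases (1 - (u + δ)) 0 with ⟨he, hpos⟩ | ⟨he, -⟩ <;> rw [he]
    · nlinarith [mul_nonneg (sub_nonneg.2 h1) (by linarith : 0 ≤ max (1 - u) 0 - δ + (1 - (u + δ)))]
    · nlinarith [sq_nonneg (max (1 - u) 0 - δ)]

lemma convexOn_balanceLoss : ConvexOn ℝ univ (balanceLoss w) := by
  refine ⟨convex_univ, fun u _ u' _ a b ha hb hab => ?_⟩
  have h := balanceLoss_sub_le hw (a • u + b • u') u
  have h' := balanceLoss_sub_le hw (a • u + b • u') u'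
  simp only [smul_eq_mul] at *
  have hb' : b = 1 - a := by linarith
  subst hb'
  nlinarith [mul_le_mul_of_nonneg_left h ha, mul_le_mul_of_nonneg_left h' hb]

end Scalar

section Offset

variable {ι : Type*} [Fintype ι]

noncomputable def residSum (w c : ι → ℝ) (a : ℝ) : ℝ := ∑ i, balanceResid (w i) (a + c i)

noncomputable def lossSum (w c : ι → ℝ) (a : ℝ) : ℝ := ∑ i, balanceLoss (w i) (a + c i)

/-- The least root of the antitone function `residSum w c` when `ι` is nonempty (otherwise
`sInf univ = 0`); any root minimises `lossSum w c`. -/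
noncomputable def balancingOffset (w c : ι → ℝ) : ℝ := sInf {a | residSum w c a ≤ 0}

noncomputable def minLoss (w c : ι → ℝ) : ℝ := lossSum w c (balancingOffset w c)

variable {w : ι → ℝ} (hw : ∀ i, w i = 0 ∨ w i = 1) (c : ι → ℝ)
include hw

lemma residSum_antitone : Antitone (residSum w c) := fun _ _ h =>
  Finset.sum_le_sum fun i _ => balanceResid_antitone (hw i) (by linarith)

lemma continuous_residSum : Continuous (residSum w c) :=
  continuous_finsetSum _ fun i _ => (continuous_balanceResid (hw i)).comp (by fun_prop)

lemma residSum_nonpos_of_le {a : ℝ} (ha : 1 + ∑ i, |c i| ≤ a) : residSum w c a ≤ 0 := by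
  refine Finset.sum_nonpos fun i _ => ?_
  have : 1 ≤ a + c i := by
    linarith [Finset.single_le_sum (fun j _ => abs_nonneg (c j)) (Finset.mem_univ i),
      neg_abs_le (c i)]
  rcases hw i with h | h <;> simp only [h, balanceResid_zero, balanceResid_one]
  · linarith
  · exact (max_eq_right (by linarith)).le

lemma residSum_pos_of_lt [Nonempty ι] {a : ℝ} (ha : a < -∑ i, |c i|) : 0 < residSum w c a := by
  refine Finset.sum_pos (fun i _ => ?_) Finset.univ_nonempty
  have : a + c i < 0 := by
    linarith [Finset.single_le_sum (fun j _ => abs_nonneg (c j)) (Finset.mem_univ i),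
      le_abs_self (c i)]
  rcases hw i with h | h <;> simp only [h, balanceResid_zero, balanceResid_one]
  · linarith
  · exact lt_max_of_lt_left (by linarith)

lemma minLoss_nonneg : 0 ≤ minLoss w c :=
  Finset.sum_nonneg fun i _ => balanceLoss_nonneg (hw i) _

lemma sq_sub_le_four_mul_lossSum {i j : ι} (hij : i ≠ j) (hi : w i = 0) (hc : c j < c i)
    (a : ℝ) : (c i - c j) ^ 2 ≤ 4 * lossSum w c a := by
  classical
  have hpair : balanceLoss (w i) (a + c i) + balanceLoss (w j) (a + c j) ≤ lossSum w c a := by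
    rw [lossSum, ← Finset.sum_pair (f := fun k => balanceLoss (w k) (a + c k)) hij]
    exact Finset.sum_le_sum_of_subset_of_nonneg (Finset.subset_univ _)
      fun k _ _ => balanceLoss_nonneg (hw k) _
  rw [hi, balanceLoss_zero] at hpair
  rcases hw j with hj | hj <;> rw [hj] at hpair
  · rw [balanceLoss_zero] at hpair
    nlinarith [sq_nonneg (a + c i + (a + c j))]
  · rw [balanceLoss_one] at hpair
    have := le_max_left (1 - (a + c j)) 0
    nlinarith [sq_nonneg (a + c i - max (1 - (a + c j)) 0),
      mul_nonneg (by linarith : 0 ≤ a + c i + max (1 - (a + c j)) 0 - (c i - c j))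
        (by linarith : 0 ≤ a + c i + max (1 - (a + c j)) 0 + (c i - c j))]

variable [Nonempty ι]

lemma bddBelow_residSum_nonpos : BddBelow {a | residSum w c a ≤ 0} :=
  ⟨-∑ i, |c i|, fun _ ha => not_lt.1 fun h => (residSum_pos_of_lt hw c h).not_ge ha⟩

lemma residSum_balancingOffset_nonpos : residSum w c (balancingOffset w c) ≤ 0 :=
  (isClosed_le (continuous_residSum hw c) continuous_const).csInf_mem
    ⟨_, residSum_nonpos_of_le hw c le_rfl⟩ (bddBelow_residSum_nonpos hw c)

lemma balancingOffset_le_iff {r : ℝ} : balancingOffset w c ≤ r ↔ residSum w c r ≤ 0 :=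
  ⟨fun h => (residSum_antitone hw c h).trans (residSum_balancingOffset_nonpos hw c),
    fun h => csInf_le (bddBelow_residSum_nonpos hw c) h⟩

lemma abs_balancingOffset_le : |balancingOffset w c| ≤ 1 + ∑ i, |c i| := by
  have hlow : -∑ i, |c i| ≤ balancingOffset w c :=
    le_csInf ⟨_, residSum_nonpos_of_le hw c le_rfl⟩
      fun _ ha => not_lt.1 fun h => (residSum_pos_of_lt hw c h).not_ge ha
  have hup := (balancingOffset_le_iff hw c).2 (residSum_nonpos_of_le hw c le_rfl)
  rw [abs_le]
  constructor <;> linarith [Finset.sum_nonneg fun i (_ : i ∈ Finset.univ) => abs_nonneg (c i)]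

lemma residSum_balancingOffset : residSum w c (balancingOffset w c) = 0 := by
  have hlim : Tendsto (residSum w c) (𝓝[<] balancingOffset w c)
      (𝓝 (residSum w c (balancingOffset w c))) :=
    ((continuous_residSum hw c).tendsto _).mono_left nhdsWithin_le_nhds
  refine le_antisymm (residSum_balancingOffset_nonpos hw c) (ge_of_tendsto hlim ?_)
  filter_upwards [self_mem_nhdsWithin] with a ha
  exact (not_le.1 fun h => (not_le.2 ha) ((balancingOffset_le_iff hw c).2 h)).le

lemma minLoss_le_lossSum (a : ℝ) : minLoss w c ≤ lossSum w c a := by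
  have key := Finset.sum_le_sum fun i (_ : i ∈ Finset.univ) =>
    balanceLoss_sub_le (hw i) (balancingOffset w c + c i) (a + c i)
  simp only [add_sub_add_right_eq_sub, Finset.sum_sub_distrib, ← Finset.sum_mul] at key
  rwa [← residSum, residSum_balancingOffset hw c, zero_mul, sub_zero] at key

lemma minLoss_le_sum_sq : minLoss w c ≤ ∑ i, (1 + |c i|) ^ 2 / 2 :=
  (minLoss_le_lossSum hw c 0).trans <| Finset.sum_le_sum fun i _ => by
    simpa using balanceLoss_le (hw i) (0 + c i)

lemma minLoss_add_const (k : ℝ) : minLoss w (c + fun _ => k) = minLoss w c := by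
  have hshift : ∀ c : ι → ℝ, ∀ a, lossSum w (c + fun _ => k) a = lossSum w c (a + k) :=
    fun c a => Finset.sum_congr rfl fun i _ => by rw [Pi.add_apply, add_right_comm, add_assoc]
  refine le_antisymm ?_ ?_
  · refine (minLoss_le_lossSum hw _ (balancingOffset w c - k)).trans_eq ?_
    rw [hshift, sub_add_cancel, minLoss]
  · exact (minLoss_le_lossSum hw c _).trans_eq (hshift _ _).symm

lemma minLoss_add_le (δ : ι → ℝ) :
    minLoss w (c + δ) ≤ minLoss w c
      - ∑ i, balanceResid (w i) (balancingOffset w c + c i) * δ i + ∑ i, δ i ^ 2 / 2 := by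
  refine (minLoss_le_lossSum hw (c + δ) (balancingOffset w c)).trans ?_
  rw [minLoss, lossSum, lossSum, ← Finset.sum_sub_distrib, ← Finset.sum_add_distrib]
  refine Finset.sum_le_sum fun i _ => ?_
  simpa only [Pi.add_apply, add_assoc] using
    balanceLoss_add_le (hw i) (balancingOffset w c + c i) (δ i)

lemma convexOn_minLoss : ConvexOn ℝ univ (minLoss w) := by
  refine ⟨convex_univ, fun c _ c' _ a b ha hb hab => ?_⟩
  refine (minLoss_le_lossSum hw _ (a * balancingOffset w c + b * balancingOffset w c')).trans ?_
  simp only [minLoss, lossSum, smul_eq_mul, Finset.mul_sum, ← Finset.sum_add_distrib]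
  refine Finset.sum_le_sum fun i _ => ?_
  convert (convexOn_balanceLoss (hw i)).2 (mem_univ (balancingOffset w c + c i))
    (mem_univ (balancingOffset w c' + c' i)) ha hb hab using 2 <;>
  simp only [Pi.add_apply, Pi.smul_apply, smul_eq_mul]
  ring

end Offset

section Measurability

variable {α ι : Type*} {mα : MeasurableSpace α} [Fintype ι] {w c : α → ι → ℝ}

lemma measurable_balancingOffset [Nonempty ι] (hw : ∀ x i, w x i = 0 ∨ w x i = 1)
    (hwm : Measurable w) (hcm : Measurable c) :
    Measurable fun x => balancingOffset (w x) (c x) := by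
  refine measurable_of_Iic fun r => ?_
  have hlevel : (fun x => balancingOffset (w x) (c x)) ⁻¹' Iic r =
      {x | residSum (w x) (c x) r ≤ 0} :=
    Set.ext fun x => balancingOffset_le_iff (hw x) (c x)
  rw [hlevel]
  refine measurableSet_le (Finset.measurable_sum _ fun i _ => ?_) measurable_const
  exact measurable_balanceResid.comp
    (((measurable_pi_apply i).comp hwm).prodMk
      (measurable_const.add ((measurable_pi_apply i).comp hcm)))

lemma measurable_minLoss [Nonempty ι] (hw : ∀ x i, w x i = 0 ∨ w x i = 1)
    (hwm : Measurable w) (hcm : Measurable c) :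
    Measurable fun x => minLoss (w x) (c x) :=
  Finset.measurable_sum _ fun i _ => continuous_balanceLoss.measurable.comp
    (((measurable_pi_apply i).comp hwm).prodMk
      ((measurable_balancingOffset hw hwm hcm).add ((measurable_pi_apply i).comp hcm)))

end Measurability

section Lineality

variable {E : Type*} [NormedAddCommGroup E] [NormedSpace ℝ E]

def linealitySpace (V : E → ℝ) : Submodule ℝ E where
  carrier := {d | ∀ x (s : ℝ), V (x + s • d) = V x}
  add_mem' {d d'} hd hd' x s := by rw [smul_add, ← add_assoc, hd', hd]
  zero_mem' x s := by rw [smul_zero, add_zero]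
  smul_mem' r d hd x s := by rw [smul_smul, hd]

variable {V : E → ℝ}

lemma ConvexOn.apply_smul_le_apply_zero (hV : ConvexOn ℝ univ V) {x : E} (hx : V x ≤ V 0)
    {θ : ℝ} (h0 : 0 ≤ θ) (h1 : θ ≤ 1) : V (θ • x) ≤ V 0 := by
  have h := hV.2 (mem_univ x) (mem_univ 0) h0 (sub_nonneg.2 h1) (add_sub_cancel θ 1)
  rw [smul_zero, add_zero, smul_eq_mul, smul_eq_mul] at h
  nlinarith

variable [FiniteDimensional ℝ E]

lemma ConvexOn.exists_norm_le_of_apply_le (hV : ConvexOn ℝ univ V)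
    (hrec : ∀ d, (∀ s : ℝ, 0 ≤ s → V (s • d) ≤ V 0) → d ∈ linealitySpace V)
    {K : Submodule ℝ E} (hK : Disjoint (linealitySpace V) K) :
    ∃ R, ∀ x ∈ K, V x ≤ V 0 → ‖x‖ ≤ R := by
  by_contra! h
  choose x hxK hxV hxR using fun n : ℕ => h n
  have hpos : ∀ n, 0 < ‖x n‖ := fun n => (Nat.cast_nonneg n).trans_lt (hxR n)
  have hu : ∀ n, ‖x n‖⁻¹ • x n ∈ (K : Set E) ∩ Metric.sphere 0 1 := fun n =>
    ⟨K.smul_mem _ (hxK n), by simp [norm_smul, (hpos n).ne']⟩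
  obtain ⟨d, ⟨hdK, hd1⟩, φ, hφ, hlim⟩ :=
    ((isCompact_sphere 0 1).inter_left K.closed_of_finiteDimensional).tendsto_subseq hu
  -- Along the limit direction `d` the rays through the `x n` stay below level `V 0`.
  have hd : d ∈ linealitySpace V := hrec d fun s hs => by
    refine le_of_tendsto ((hV.locallyLipschitz.continuous.tendsto _).comp
      (hlim.const_smul s)) ?_
    filter_upwards [eventually_ge_atTop ⌈s⌉₊] with n hn
    have hs' : s ≤ ‖x (φ n)‖ :=
      calc s ≤ ⌈s⌉₊ := Nat.le_ceil s
        _ ≤ φ n := by exact_mod_cast hn.trans hφ.le_apply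
        _ ≤ ‖x (φ n)‖ := (hxR _).le
    simp only [Function.comp_apply, smul_smul, ← div_eq_mul_inv]
    exact hV.apply_smul_le_apply_zero (hxV _) (by positivity)
      (div_le_one_of_le₀ hs' (norm_nonneg _))
  simp [Submodule.disjoint_def.1 hK d hd hdK] at hd1

theorem ConvexOn.exists_forall_le_of_recession (hV : ConvexOn ℝ univ V)
    (hrec : ∀ d, (∀ s : ℝ, 0 ≤ s → V (s • d) ≤ V 0) → d ∈ linealitySpace V) :
    ∃ x, ∀ y, V x ≤ V y := by
  obtain ⟨K, hK⟩ := (linealitySpace V).exists_isCompl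
  obtain ⟨R, hR⟩ := hV.exists_norm_le_of_apply_le hrec hK.disjoint
  have h0 : (0 : E) ∈ (K : Set E) ∩ Metric.closedBall 0 R :=
    ⟨K.zero_mem, by simpa using hR 0 K.zero_mem le_rfl⟩
  obtain ⟨x, -, hxmin⟩ := ((isCompact_closedBall 0 R).inter_left K.closed_of_finiteDimensional
    ).exists_isMinOn ⟨0, h0⟩ hV.locallyLipschitz.continuous.continuousOn
  refine ⟨x, fun y => ?_⟩
  obtain ⟨l, hl, k, hk, rfl⟩ :=
    Submodule.mem_sup.1 (hK.sup_eq_top ▸ Submodule.mem_top : y ∈ linealitySpace V ⊔ K)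
  rw [show V (l + k) = V k by simpa [add_comm] using hl k 1]
  by_cases hk0 : V k ≤ V 0
  · exact isMinOn_iff.1 hxmin k ⟨hk, by simpa using hR k hk hk0⟩
  · exact (isMinOn_iff.1 hxmin 0 h0).trans (not_le.1 hk0).le

end Lineality

lemma eq_zero_of_forall_mul_le_mul_sq {I C : ℝ} (h : ∀ s : ℝ, s * I ≤ C * s ^ 2) : I = 0 := by
  have hC : 0 < |C| + 1 := by positivity
  have h1 := h (I / (|C| + 1))
  have h2 : C * (I / (|C| + 1)) ^ 2 ≤ |C| * (I / (|C| + 1)) ^ 2 :=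
    mul_le_mul_of_nonneg_right (le_abs_self C) (sq_nonneg _)
  have h3 : I / (|C| + 1) * I = (|C| + 1) * (I / (|C| + 1)) ^ 2 := by field_simp
  have hx : (I / (|C| + 1)) ^ 2 ≤ 0 := by linarith
  simpa [hC.ne'] using (pow_eq_zero_iff two_ne_zero).1 (le_antisymm hx (sq_nonneg _))

lemma nonpos_of_forall_sq_mul_le {I C : ℝ} (h : ∀ s : ℝ, 0 < s → s ^ 2 * I ≤ C) : I ≤ 0 := by
  by_contra! hI
  have hs : 1 ≤ (|C| + 1) / I + 1 := by linarith [div_nonneg (by positivity : 0 ≤ |C| + 1) hI.le]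
  have h1 := h ((|C| + 1) / I + 1) (by linarith)
  have h2 : ((|C| + 1) / I + 1) * I = |C| + 1 + I := by field_simp
  nlinarith [le_abs_self C, mul_le_mul_of_nonneg_right hs hI.le]

lemma measure_eq_zero_of_condExp_le {Ω : Type*} {m m0 : MeasurableSpace Ω} {μ : Measure Ω}
    [IsFiniteMeasure μ] (hm : m ≤ m0) {f : Ω → ℝ} (hf : Integrable f μ) {η : ℝ} (hη : 0 < η)
    (hfm : ∀ᵐ ω ∂μ, μ[f|m] ω ≤ 1 - η) {A : Set Ω} (hA : MeasurableSet[m] A)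
    (hfA : ∀ᵐ ω ∂μ, ω ∈ A → 1 ≤ f ω) : μ A = 0 := by
  have hlow : μ.real A ≤ ∫ ω in A, f ω ∂μ :=
    calc μ.real A = ∫ _ in A, (1 : ℝ) ∂μ := by simp
      _ ≤ ∫ ω in A, f ω ∂μ := setIntegral_mono_ae_restrict (integrableOn_const)
          hf.integrableOn ((ae_restrict_iff' (hm _ hA)).2 hfA)
  have hup : ∫ ω in A, f ω ∂μ ≤ (1 - η) * μ.real A :=
    calc ∫ ω in A, f ω ∂μ = ∫ ω in A, μ[f|m] ω ∂μ := (setIntegral_condExp hm hf hA).symm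
      _ ≤ ∫ _ in A, (1 - η) ∂μ := setIntegral_mono_ae_restrict integrable_condExp.integrableOn
          integrableOn_const (ae_restrict_of_ae hfm)
      _ = (1 - η) * μ.real A := by simp [mul_comm]
  have : μ.real A = 0 := by nlinarith [measureReal_nonneg (μ := μ) (s := A)]
  exact (measureReal_eq_zero_iff).1 this

section Design

variable {α ι κ : Type*} [Fintype κ]

lemma abs_mulVec_apply_le {M : Matrix ι κ ℝ} {B : ℝ} (hM : ∀ i k, |M i k| ≤ B) (v : κ → ℝ)
    (i : ι) : |(M *ᵥ v) i| ≤ B * ∑ k, |v k| := by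
  rw [Finset.mul_sum]
  refine (Finset.abs_sum_le_sum_abs _ _).trans (Finset.sum_le_sum fun k _ => ?_)
  rw [abs_mul]
  exact mul_le_mul_of_nonneg_right (hM i k) (abs_nonneg _)

lemma measurable_mulVec {mα : MeasurableSpace α} {Z : α → Matrix ι κ ℝ}
    (hZ : ∀ i k, Measurable fun x => Z x i k) (v : κ → ℝ) : Measurable fun x => Z x *ᵥ v :=
  measurable_pi_lambda _ fun i => Finset.measurable_sum _ fun k _ => (hZ i k).mul_const _

end Design

noncomputable def expectedMinLoss {Ω ι κ : Type*} [MeasurableSpace Ω] [Fintype ι] [Fintype κ]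
    (μ : Measure Ω) (W : Ω → ι → ℝ) (Z : Ω → Matrix ι κ ℝ) (γ : κ → ℝ) : ℝ :=
  ∫ ω, minLoss (W ω) (Z ω *ᵥ γ) ∂μ

noncomputable def balanceScore {Ω ι κ : Type*} [Fintype ι] [Fintype κ]
    (W : Ω → ι → ℝ) (Z : Ω → Matrix ι κ ℝ) (γ : κ → ℝ) (k : κ) (ω : Ω) : ℝ :=
  ∑ i, balanceResid (W ω i) (balancingOffset (W ω) (Z ω *ᵥ γ) + (Z ω *ᵥ γ) i) * Z ω i k

section ExpectedLoss

variable {Ω ι κ : Type*} [Fintype ι] [Nonempty ι] [Fintype κ] {m m0 : MeasurableSpace Ω}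
  {μ : Measure Ω} {W : Ω → ι → ℝ} {Z : Ω → Matrix ι κ ℝ} {B : ℝ}
  (hW : ∀ ω i, W ω i = 0 ∨ W ω i = 1)

include hW

lemma mem_linealitySpace_expectedMinLoss {d : κ → ℝ}
    (hd : ∀ i j, ∀ᵐ ω ∂μ, (Z ω *ᵥ d) i = (Z ω *ᵥ d) j) :
    d ∈ linealitySpace (expectedMinLoss μ W Z) := fun γ s => by
  obtain ⟨i₀⟩ := ‹Nonempty ι›
  refine integral_congr_ae ?_
  filter_upwards [ae_all_iff.2 fun i => hd i i₀] with ω hω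
  have hconst : Z ω *ᵥ (s • d) = fun _ => s * (Z ω *ᵥ d) i₀ := by
    ext i; rw [Matrix.mulVec_smul, Pi.smul_apply, hω i, smul_eq_mul]
  rw [Matrix.mulVec_add, hconst, minLoss_add_const (hW ω)]

variable [IsProbabilityMeasure μ]

lemma integrable_minLoss (hWm : Measurable W) (hZm : ∀ i k, Measurable fun ω => Z ω i k)
    (hZB : ∀ ω i k, |Z ω i k| ≤ B) (γ : κ → ℝ) :
    Integrable (fun ω => minLoss (W ω) (Z ω *ᵥ γ)) μ := by
  refine .of_bound (measurable_minLoss hW hWm (measurable_mulVec hZm γ)).aestronglyMeasurable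
    (∑ _i : ι, (1 + B * ∑ k, |γ k|) ^ 2 / 2) (ae_of_all _ fun ω => ?_)
  rw [Real.norm_eq_abs, abs_of_nonneg (minLoss_nonneg (hW ω) _)]
  refine (minLoss_le_sum_sq (hW ω) _).trans (Finset.sum_le_sum fun i _ => ?_)
  gcongr
  exact abs_mulVec_apply_le (hZB ω) γ i

lemma convexOn_expectedMinLoss (hWm : Measurable W) (hZm : ∀ i k, Measurable fun ω => Z ω i k)
    (hZB : ∀ ω i k, |Z ω i k| ≤ B) : ConvexOn ℝ univ (expectedMinLoss μ W Z) := by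
  refine ⟨convex_univ, fun γ _ γ' _ a b ha hb hab => ?_⟩
  have hint := integrable_minLoss (μ := μ) hW hWm hZm hZB
  simp only [expectedMinLoss, smul_eq_mul, ← integral_const_mul]
  rw [← integral_add ((hint γ).const_mul a) ((hint γ').const_mul b)]
  refine integral_mono (hint _) (((hint γ).const_mul a).add ((hint γ').const_mul b)) fun ω => ?_
  simpa only [Matrix.mulVec_add, Matrix.mulVec_smul, smul_eq_mul] using
    (convexOn_minLoss (hW ω)).2 (mem_univ (Z ω *ᵥ γ)) (mem_univ (Z ω *ᵥ γ')) ha hb hab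

lemma integrable_balanceScore (hWm : Measurable W) (hZm : ∀ i k, Measurable fun ω => Z ω i k)
    (hZB : ∀ ω i k, |Z ω i k| ≤ B) (γ : κ → ℝ) (k : κ) :
    Integrable (balanceScore W Z γ k) μ := by
  have hcm := measurable_mulVec hZm γ
  have hmeas : Measurable (balanceScore W Z γ k) :=
    Finset.measurable_sum _ fun i _ => (measurable_balanceResid.comp
      (((measurable_pi_apply i).comp hWm).prodMk ((measurable_balancingOffset hW hWm hcm).add
        ((measurable_pi_apply i).comp hcm)))).mul (hZm i k)
  set D := B * ∑ k, |γ k|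
  refine .of_bound hmeas.aestronglyMeasurable (∑ _i : ι, (2 + ∑ _i : ι, D + D) * B)
    (ae_of_all _ fun ω => ?_)
  have hc : ∀ i, |(Z ω *ᵥ γ) i| ≤ D := abs_mulVec_apply_le (hZB ω) γ
  have hoff := abs_balancingOffset_le (hW ω) (Z ω *ᵥ γ)
  have hsum : ∑ i, |(Z ω *ᵥ γ) i| ≤ ∑ _i : ι, D := Finset.sum_le_sum fun i _ => hc i
  rw [Real.norm_eq_abs]
  refine (Finset.abs_sum_le_sum_abs _ _).trans (Finset.sum_le_sum fun i _ => ?_)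
  have hD : 0 ≤ D := (abs_nonneg _).trans (hc i)
  rw [abs_mul]
  refine mul_le_mul ((abs_balanceResid_le (hW ω i) _).trans ?_) (hZB ω i k) (abs_nonneg _)
    (add_nonneg (add_nonneg zero_le_two (Finset.sum_nonneg fun _ _ => hD)) hD)
  linarith [abs_add_le (balancingOffset (W ω) (Z ω *ᵥ γ)) ((Z ω *ᵥ γ) i), hc i]

lemma expectedMinLoss_add_smul_single_le [DecidableEq κ] (hWm : Measurable W)
    (hZm : ∀ i k, Measurable fun ω => Z ω i k) (hZB : ∀ ω i k, |Z ω i k| ≤ B) (γ : κ → ℝ)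
    (k : κ) (s : ℝ) :
    expectedMinLoss μ W Z (γ + s • Pi.single k 1) ≤ expectedMinLoss μ W Z γ
      - s * ∫ ω, balanceScore W Z γ k ω ∂μ + Fintype.card ι * B ^ 2 / 2 * s ^ 2 := by
  have hint := integrable_minLoss (μ := μ) hW hWm hZm hZB
  have hpt : ∀ ω, minLoss (W ω) (Z ω *ᵥ (γ + s • Pi.single k 1)) ≤ minLoss (W ω) (Z ω *ᵥ γ)
      - s * balanceScore W Z γ k ω + Fintype.card ι * B ^ 2 / 2 * s ^ 2 := by
    intro ω
    have hcol : Z ω *ᵥ (γ + s • Pi.single k 1) = Z ω *ᵥ γ + fun i => s * Z ω i k := by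
      ext i
      simp [Matrix.mulVec_add, Matrix.mulVec_smul]
    have hscore : ∑ i, balanceResid (W ω i) (balancingOffset (W ω) (Z ω *ᵥ γ) + (Z ω *ᵥ γ) i) *
        (s * Z ω i k) = s * balanceScore W Z γ k ω := by
      rw [balanceScore, Finset.mul_sum]
      exact Finset.sum_congr rfl fun i _ => by ring
    have hsq : ∑ i, (s * Z ω i k) ^ 2 / 2 ≤ Fintype.card ι * B ^ 2 / 2 * s ^ 2 :=
      calc ∑ i, (s * Z ω i k) ^ 2 / 2 ≤ ∑ _i : ι, B ^ 2 / 2 * s ^ 2 :=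
            Finset.sum_le_sum fun i _ => by
              nlinarith [pow_le_pow_left₀ (abs_nonneg _) (hZB ω i k) 2, sq_nonneg s,
                sq_abs (Z ω i k)]
        _ = Fintype.card ι * B ^ 2 / 2 * s ^ 2 := by simp; ring
    rw [hcol]
    linarith [minLoss_add_le (hW ω) (Z ω *ᵥ γ) fun i => s * Z ω i k]
  have hscore := (integrable_balanceScore hW hWm hZm hZB γ k).const_mul (μ := μ) s
  have hdiff : Integrable (fun ω => minLoss (W ω) (Z ω *ᵥ γ) - s * balanceScore W Z γ k ω) μ :=
    (hint γ).sub hscore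
  calc _ ≤ ∫ ω, (minLoss (W ω) (Z ω *ᵥ γ) - s * balanceScore W Z γ k ω
          + Fintype.card ι * B ^ 2 / 2 * s ^ 2) ∂μ :=
        integral_mono (hint _) (hdiff.add (integrable_const _)) hpt
    _ = _ := by
        rw [integral_add hdiff (integrable_const _),
          integral_sub (hint γ) hscore, integral_const_mul]
        simp [expectedMinLoss]

lemma ae_le_of_expectedMinLoss_smul_le (hWm : Measurable W)
    (hZm : ∀ i k, Measurable fun ω => Z ω i k) (hZB : ∀ ω i k, |Z ω i k| ≤ B) {d : κ → ℝ}
    (hd : ∀ s : ℝ, 0 ≤ s → expectedMinLoss μ W Z (s • d) ≤ expectedMinLoss μ W Z 0) (i j : ι) :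
    ∀ᵐ ω ∂μ, W ω i = 0 → (Z ω *ᵥ d) i ≤ (Z ω *ᵥ d) j := by
  rcases eq_or_ne i j with rfl | hij
  · exact ae_of_all _ fun _ _ => le_rfl
  set c := fun ω => Z ω *ᵥ d
  set E := {ω | W ω i = 0 ∧ c ω j < c ω i}
  set q := E.indicator fun ω => (c ω i - c ω j) ^ 2
  have hcm : ∀ i, Measurable fun ω => c ω i := fun i =>
    (measurable_pi_apply i).comp (measurable_mulVec hZm d)
  have hE : MeasurableSet E := ((measurable_pi_apply i).comp hWm (measurableSet_singleton 0)).inter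
    (measurableSet_lt (hcm j) (hcm i))
  have hq_nonneg : 0 ≤ q := Set.indicator_nonneg fun _ _ => sq_nonneg _
  have hq_int : Integrable q μ := by
    refine (Integrable.of_bound (((hcm i).sub (hcm j)).pow_const 2).aestronglyMeasurable
      ((2 * (B * ∑ k, |d k|)) ^ 2) (ae_of_all _ fun ω => ?_)).indicator hE
    have hi := abs_mulVec_apply_le (hZB ω) d i
    have hj := abs_mulVec_apply_le (hZB ω) d j
    rw [Real.norm_eq_abs, abs_pow]
    exact pow_le_pow_left₀ (abs_nonneg _) ((abs_sub _ _).trans (by linarith)) 2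
  have hscale : ∀ s : ℝ, 0 < s → s ^ 2 * ∫ ω, q ω ∂μ ≤ 4 * expectedMinLoss μ W Z 0 := by
    intro s hs
    rw [← integral_const_mul]
    refine (integral_mono (hq_int.const_mul _) ((integrable_minLoss hW hWm hZm hZB
      (s • d)).const_mul 4) fun ω => ?_).trans ?_
    · by_cases hω : ω ∈ E
      · rw [show q ω = _ from Set.indicator_of_mem hω _, Matrix.mulVec_smul, ← mul_pow, mul_sub]
        exact sq_sub_le_four_mul_lossSum (hW ω) (s • c ω) hij hω.1
          (by simpa using mul_lt_mul_of_pos_left hω.2 hs) _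
      · rw [show q ω = 0 from Set.indicator_of_notMem hω _, mul_zero]
        exact mul_nonneg zero_le_four (minLoss_nonneg (hW ω) _)
    · rw [integral_const_mul]
      exact mul_le_mul_of_nonneg_left (hd s hs.le) zero_le_four
  have hq0 : q =ᵐ[μ] 0 := (integral_eq_zero_iff_of_nonneg hq_nonneg hq_int).1
    (le_antisymm (nonpos_of_forall_sq_mul_le hscale) (integral_nonneg hq_nonneg))
  filter_upwards [hq0] with ω hω hWi
  by_contra! hlt
  have hqω : q ω = (c ω i - c ω j) ^ 2 := Set.indicator_of_mem (show ω ∈ E from ⟨hWi, hlt⟩) _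
  exact (pow_pos (sub_pos.2 hlt) 2).ne' (hqω.symm.trans hω)

/-- The event where the one-sided comparison of `ae_le_of_expectedMinLoss_smul_le` fails is
`m`-measurable and almost surely treated, so overlap makes it null. -/
lemma ae_eq_of_expectedMinLoss_smul_le (hm : m ≤ m0) (hWm : Measurable W)
    (hZm : ∀ i k, Measurable[m] fun ω => Z ω i k) (hZB : ∀ ω i k, |Z ω i k| ≤ B) {η : ℝ}
    (hη : 0 < η) (hoverlap : ∀ i, ∀ᵐ ω ∂μ, μ[fun ω => W ω i | m] ω ≤ 1 - η) {d : κ → ℝ}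
    (hd : ∀ s : ℝ, 0 ≤ s → expectedMinLoss μ W Z (s • d) ≤ expectedMinLoss μ W Z 0) (i j : ι) :
    ∀ᵐ ω ∂μ, (Z ω *ᵥ d) i = (Z ω *ᵥ d) j := by
  have hle : ∀ i j, ∀ᵐ ω ∂μ, (Z ω *ᵥ d) i ≤ (Z ω *ᵥ d) j := by
    intro i j
    have hcm := measurable_mulVec hZm d
    have hA : MeasurableSet[m] {ω | (Z ω *ᵥ d) j < (Z ω *ᵥ d) i} :=
      measurableSet_lt ((measurable_pi_apply j).comp hcm) ((measurable_pi_apply i).comp hcm)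
    have hWi : Integrable (fun ω => W ω i) μ :=
      .of_bound ((measurable_pi_apply i).comp hWm).aestronglyMeasurable 1
        (ae_of_all _ fun ω => by rcases hW ω i with h | h <;> simp [h])
    have hnull : μ {ω | (Z ω *ᵥ d) j < (Z ω *ᵥ d) i} = 0 := by
      refine measure_eq_zero_of_condExp_le hm hWi hη (hoverlap i) hA ?_
      filter_upwards [ae_le_of_expectedMinLoss_smul_le hW hWm (fun i k => (hZm i k).mono hm le_rfl)
        hZB hd i j] with ω h hω
      rcases hW ω i with h0 | h1
      · exact absurd (h h0) (not_le.2 hω)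
      · exact h1.ge
    filter_upwards [measure_eq_zero_iff_ae_notMem.1 hnull] with ω hω using not_lt.1 hω
  filter_upwards [hle i j, hle j i] with ω h h' using le_antisymm h h'

theorem exists_integral_balanceScore_eq_zero (hm : m ≤ m0) (hWm : Measurable W)
    (hZm : ∀ i k, Measurable[m] fun ω => Z ω i k) (hZB : ∀ ω i k, |Z ω i k| ≤ B) {η : ℝ}
    (hη : 0 < η) (hoverlap : ∀ i, ∀ᵐ ω ∂μ, μ[fun ω => W ω i | m] ω ≤ 1 - η) :
    ∃ γ : κ → ℝ, ∀ k, ∫ ω, balanceScore W Z γ k ω ∂μ = 0 := by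
  classical
  have hZm₀ : ∀ i k, Measurable fun ω => Z ω i k := fun i k => (hZm i k).mono hm le_rfl
  obtain ⟨γ, hγ⟩ :=
    (convexOn_expectedMinLoss (μ := μ) hW hWm hZm₀ hZB).exists_forall_le_of_recession
      fun d hd => mem_linealitySpace_expectedMinLoss hW
        (ae_eq_of_expectedMinLoss_smul_le hW hm hWm hZm hZB hη hoverlap hd)
  refine ⟨γ, fun k => eq_zero_of_forall_mul_le_mul_sq (C := Fintype.card ι * B ^ 2 / 2) fun s => ?_⟩
  linarith [hγ (γ + s • Pi.single k 1),
    expectedMinLoss_add_smul_single_le (μ := μ) hW hWm hZm₀ hZB γ k s]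

end ExpectedLoss

theorem oracle_weights_exist_general
    {Ωs 𝒳 𝕊 : Type*} [MeasurableSpace Ωs] [MeasurableSpace 𝒳] [MeasurableSpace 𝕊]
    (μ : Measure Ωs) [IsProbabilityMeasure μ]
    (T p : ℕ) (hT : 0 < T)
    (W : Ωs → Fin T → ℝ) (hWmeas : Measurable W)
    (hW01 : ∀ ω t, W ω t = 0 ∨ W ω t = 1)
    (X : Ωs → 𝒳) (hX : Measurable X)
    -- the statistic S, a measurable function of (W, X)
    (S : Ωs → 𝕊) (hS : Measurable S)
    (hSstat : @Measurable Ωs 𝕊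
      (MeasurableSpace.comap (fun ω => (W ω, X ω)) inferInstance) _ S)
    -- overlap: E[W_t | S, X] ≤ 1 − η a.s.
    (η : ℝ) (hη : 0 < η)
    (hoverlap : ∀ t, ∀ᵐ ω ∂μ,
      (μ[(fun ω' => W ω' t) |
        MeasurableSpace.comap (fun ω'' => (S ω'', X ω'')) inferInstance]) ω ≤ 1 - η)
    -- bounded measurable covariate functions ψ_t = ψ(X, S, t)
    (ψ : Fin T → 𝕊 × 𝒳 → Fin p → ℝ)
    (hψmeas : ∀ t, Measurable (ψ t))
    (Cψ : ℝ) (hψbdd : ∀ t x j, |ψ t x j| ≤ Cψ) :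
    ∃ (αstar : Ωs → ℝ) (γstar : Fin p → ℝ),
      @Measurable Ωs ℝ
        (MeasurableSpace.comap (fun ω => (W ω, X ω)) inferInstance) _ αstar ∧
      (∀ j, ∫ ω, (∑ t,
          (W ω t - αstar ω - ∑ j', ψ t (S ω, X ω) j' * γstar j') *
            ψ t (S ω, X ω) j *
            (1 - W ω t *
              (if W ω t - αstar ω - ∑ j', ψ t (S ω, X ω) j' * γstar j' ≤ 0
                then (1 : ℝ) else 0))) ∂μ = 0) ∧
      (∀ᵐ ω ∂μ, ∑ t,
          (W ω t - αstar ω - ∑ j', ψ t (S ω, X ω) j' * γstar j') *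
            (1 - W ω t *
              (if W ω t - αstar ω - ∑ j', ψ t (S ω, X ω) j' * γstar j' ≤ 0
                then (1 : ℝ) else 0)) = 0) := by
  have : Nonempty (Fin T) := ⟨⟨0, hT⟩⟩
  set Z : Ωs → Matrix (Fin T) (Fin p) ℝ := fun ω => Matrix.of fun t j => ψ t (S ω, X ω) j
  have hZ : ∀ {mΩ : MeasurableSpace Ωs}, Measurable[mΩ] (fun ω => (S ω, X ω)) →
      ∀ t j, Measurable[mΩ] fun ω => Z ω t j :=
    fun hSX t j => (measurable_pi_apply j).comp ((hψmeas t).comp hSX)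
  have hc : ∀ γ ω t, (Z ω *ᵥ γ) t = ∑ j, ψ t (S ω, X ω) j * γ j := fun _ _ _ => rfl
  obtain ⟨γ, hγ⟩ := exists_integral_balanceScore_eq_zero hW01 (hS.prodMk hX).comap_le hWmeas
    (hZ (comap_measurable _)) (fun ω t j => hψbdd t _ j) hη hoverlap
  have hWX : Measurable[MeasurableSpace.comap (fun ω => (W ω, X ω)) inferInstance]
      fun ω => (W ω, X ω) := comap_measurable _
  refine ⟨fun ω => balancingOffset (W ω) (Z ω *ᵥ γ), γ,
    measurable_balancingOffset hW01 (measurable_fst.comp hWX)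
      (measurable_mulVec (hZ (hSstat.prodMk (measurable_snd.comp hWX))) γ),
    fun j => ?_, ae_of_all _ fun ω => ?_⟩
  · refine (integral_congr_ae (ae_of_all _ fun ω => Finset.sum_congr rfl fun t _ => ?_)).trans
      (hγ j)
    simp only [balanceResid, hc, sub_sub, Z, Matrix.of_apply]
    ring
  · simpa only [residSum, balanceResid, hc, sub_sub] using
      residSum_balancingOffset (hW01 ω) (Z ω *ᵥ γ)

/-- **Lemma 3 (Existence of oracle balancing parameters).**
Let `(W, X) ∼ 𝒫` with `W ∈ {0,1}^T`, and let `S = S(W,X)` be a statistic such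
that `W̄ = (1/T)·Σ_t W_t` is `σ(S,X)`-measurable.  Suppose
`E[W_t | S, X] ≤ 1 − η` a.s. for all `t` (some `η > 0`) and that the covariate
functions `ψ_t = ψ(X, S, t)` are bounded and measurable.  Then there exist a
`σ(W,X)`-measurable random variable `α*` and `γ* ∈ ℝ^p` such that, with
`ξ_t = W_t − α* − ψ_tᵀγ*` and `m_t = 1 − W_t·1{ξ_t ≤ 0}`,
`E[Σ_t ξ_t ψ_t m_t] = 0` (in `ℝ^p`) and `Σ_t ξ_t m_t = 0` a.s. -/
theorem oracle_weights_exist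
    {Ωs 𝒳 𝕊 : Type*} [MeasurableSpace Ωs] [MeasurableSpace 𝒳] [MeasurableSpace 𝕊]
    (μ : Measure Ωs) [IsProbabilityMeasure μ]
    (T p : ℕ) (hT : 0 < T)
    (W : Ωs → Fin T → ℝ) (hWmeas : Measurable W)
    (hW01 : ∀ ω t, W ω t = 0 ∨ W ω t = 1)
    (X : Ωs → 𝒳) (hX : Measurable X)
    -- the statistic S, a measurable function of (W, X)
    (S : Ωs → 𝕊) (hS : Measurable S)
    (hSstat : @Measurable Ωs 𝕊
      (MeasurableSpace.comap (fun ω => (W ω, X ω)) inferInstance) _ S)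
    -- W̄ is σ(S, X)-measurable
    (hWbar : @Measurable Ωs ℝ
      (MeasurableSpace.comap (fun ω => (S ω, X ω)) inferInstance) _
      (fun ω => (1 / (T : ℝ)) * ∑ t, W ω t))
    -- overlap: E[W_t | S, X] ≤ 1 − η a.s.
    (η : ℝ) (hη : 0 < η)
    (hoverlap : ∀ t, ∀ᵐ ω ∂μ,
      (μ[(fun ω' => W ω' t) |
        MeasurableSpace.comap (fun ω'' => (S ω'', X ω'')) inferInstance]) ω ≤ 1 - η)
    -- bounded measurable covariate functions ψ_t = ψ(X, S, t)
    (ψ : Fin T → 𝕊 × 𝒳 → Fin p → ℝ)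
    (hψmeas : ∀ t, Measurable (ψ t))
    (Cψ : ℝ) (hψbdd : ∀ t x j, |ψ t x j| ≤ Cψ) :
    ∃ (αstar : Ωs → ℝ) (γstar : Fin p → ℝ),
      @Measurable Ωs ℝ
        (MeasurableSpace.comap (fun ω => (W ω, X ω)) inferInstance) _ αstar ∧
      (∀ j, ∫ ω, (∑ t,
          (W ω t - αstar ω - ∑ j', ψ t (S ω, X ω) j' * γstar j') *
            ψ t (S ω, X ω) j *
            (1 - W ω t *
              (if W ω t - αstar ω - ∑ j', ψ t (S ω, X ω) j' * γstar j' ≤ 0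
                then (1 : ℝ) else 0))) ∂μ = 0) ∧
      (∀ᵐ ω ∂μ, ∑ t,
          (W ω t - αstar ω - ∑ j', ψ t (S ω, X ω) j' * γstar j') *
            (1 - W ω t *
              (if W ω t - αstar ω - ∑ j', ψ t (S ω, X ω) j' * γstar j' ≤ 0
                then (1 : ℝ) else 0)) = 0) :=
  oracle_weights_exist_general μ T p hT W hWmeas hW01 X hX S hS hSstat η hη hoverlap ψ hψmeas Cψ
    hψbdd
end

section
/- Let W = (W_1,…,W_T) ∈ {0,1}^T and X be random elements, let 𝒢 := σ(S, X) for a statistic S = S(W, X) such that W̄ := (1/T)·Σ_t W_t is 𝒢-measurable, and set f*_t := E[W_t | 𝒢]; suppose f*_t ≤ 1 − η almost surely for all t, for some η > 0. Define R(f) := E[(1/T)·Σ_{t=1}^T ρ_{W_t}(W_t − f_t)] and let 𝓕 be the class of f = (f_1,…,f_T) with f_t = g(W, X) + h_t(S, X) for bounded measurable functions g and h_t. Then f* = (f*_1,…,f*_T) belongs to 𝓕 and is the unique minimizer of R over 𝓕: R(f) > R(f*) for every f ∈ 𝓕 that differs from f* on a set of positive probability. -/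
open MeasureTheory
open scoped BigOperators

/-! For `w ∈ {0,1}` and `p ≤ 1` the loss expands exactly as
`ρ_w(w - a) = ρ_w(w - p) + drExcess w a p - 2 (w - p) (a - p)`, where the excess is nonnegative
and vanishes only at `a = p` when `p < 1`. Take `p = f*_t`, `a = f_t = g + h_t` and sum over `t`.
The cross terms integrate to zero: the `h_t` part because `W_t - f*_t` is orthogonal to bounded
`𝒢`-measurable functions, the `g` part because `∑_t (W_t - f*_t) = 0` a.s., as `W̄` is
`𝒢`-measurable. So `R(f) - R(f*)` is the average over `t` of `E[drExcess W_t f_t f*_t]`, which is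
positive unless `f = f*` a.s. That `f* ∈ 𝓕` is the Doob–Dynkin factorization `f*_t = h_t(S, X)`,
truncated to `[-1, 1]`. -/

-- `a - w * max (a - 1) 0` is `a` truncated at `1` when `w = 1`, where `ρ_1(1 - a)` is flat in `a`.
noncomputable def drExcess (w a p : ℝ) : ℝ :=
  (a - w * max (a - 1) 0 - p) ^ 2 + 2 * w * (1 - p) * max (a - 1) 0

section Loss

variable {w p : ℝ}

lemma abs_le_one_of_eq_zero_or_eq_one (hw : w = 0 ∨ w = 1) : |w| ≤ 1 := by
  rcases hw with rfl | rfl <;> simp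

lemma drRho_sub_eq (hw : w = 0 ∨ w = 1) (hp : p ≤ 1) (a : ℝ) :
    drRho w (w - a) = drRho w (w - p) + drExcess w a p - 2 * (w - p) * (a - p) := by
  rcases hw with rfl | rfl
  · simp only [drRho, drExcess]
    ring
  rcases le_total a 1 with ha | ha
  · simp only [drRho, drExcess, max_eq_left (sub_nonneg.2 ha), max_eq_left (sub_nonneg.2 hp),
      max_eq_right (sub_nonpos.2 ha)]
    ring
  · simp only [drRho, drExcess, max_eq_right (sub_nonpos.2 ha), max_eq_left (sub_nonneg.2 hp),
      max_eq_left (sub_nonneg.2 ha)]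
    ring

lemma drExcess_nonneg {a : ℝ} (hw : 0 ≤ w) (hp : p ≤ 1) : 0 ≤ drExcess w a p :=
  add_nonneg (sq_nonneg _) <| mul_nonneg
    (mul_nonneg (mul_nonneg zero_le_two hw) (sub_nonneg.2 hp)) (le_max_right _ _)

lemma eq_of_drExcess_eq_zero {a : ℝ} (hw : 0 ≤ w) (hp : p < 1) (h : drExcess w a p = 0) :
    a = p := by
  unfold drExcess at h
  have hsq := sq_nonneg (a - w * max (a - 1) 0 - p)
  have hM : 0 ≤ w * max (a - 1) 0 := mul_nonneg hw (le_max_right _ _)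
  have hwM : w * max (a - 1) 0 = 0 := by nlinarith
  nlinarith

lemma abs_drRho_le (hw₀ : 0 ≤ w) (hw₁ : w ≤ 1) (x : ℝ) : |drRho w x| ≤ x ^ 2 := by
  have hmax : max x 0 ^ 2 ≤ x ^ 2 := by
    rcases le_total x 0 with hx | hx
    · rw [max_eq_right hx]
      nlinarith
    · rw [max_eq_left hx]
  have hmax₀ := sq_nonneg (max x 0)
  unfold drRho
  rw [abs_le]
  constructor <;> nlinarith [sq_nonneg x]

end Loss

section LossIntegrals

variable {Ω : Type*} {m0 : MeasurableSpace Ω} {μ : Measure Ω} {W F P : Ω → ℝ}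

lemma drExcess_ae_eq (hW : ∀ ω, W ω = 0 ∨ W ω = 1) (hP : ∀ᵐ ω ∂μ, P ω ≤ 1) :
    (fun ω => drExcess (W ω) (F ω) (P ω)) =ᵐ[μ] fun ω =>
      drRho (W ω) (W ω - F ω) - drRho (W ω) (W ω - P ω) + 2 * ((W ω - P ω) * (F ω - P ω)) := by
  filter_upwards [hP] with ω hω
  rw [drRho_sub_eq (hW ω) hω (F ω)]
  ring

lemma integral_drExcess_pos (hW : ∀ ω, 0 ≤ W ω) (hP : ∀ᵐ ω ∂μ, P ω < 1)
    (he : Integrable (fun ω => drExcess (W ω) (F ω) (P ω)) μ) (hne : ¬ F =ᵐ[μ] P) :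
    0 < ∫ ω, drExcess (W ω) (F ω) (P ω) ∂μ := by
  have hnn : 0 ≤ᵐ[μ] fun ω => drExcess (W ω) (F ω) (P ω) := by
    filter_upwards [hP] with ω hω
    exact drExcess_nonneg (hW ω) hω.le
  refine (integral_nonneg_of_ae hnn).lt_of_ne fun h₀ => hne ?_
  filter_upwards [(integral_eq_zero_iff_of_nonneg_ae hnn he).1 h₀.symm, hP] with ω hω hPω
  exact eq_of_drExcess_eq_zero (hW ω) hPω hω

variable [IsFiniteMeasure μ] (hWm : AEStronglyMeasurable W μ) (hW : ∀ ω, W ω = 0 ∨ W ω = 1)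
  (hF : AEStronglyMeasurable F μ) {C : ℝ} (hFC : ∀ᵐ ω ∂μ, |F ω| ≤ C)
include hWm hW hF hFC

lemma integrable_drRho_sub : Integrable (fun ω => drRho (W ω) (W ω - F ω)) μ := by
  have hρ : Continuous fun q : ℝ × ℝ => drRho q.1 q.2 := by
    unfold drRho
    fun_prop
  refine .of_bound (hρ.comp_aestronglyMeasurable (hWm.prodMk (hWm.sub hF))) ((1 + C) ^ 2) ?_
  filter_upwards [hFC] with ω hω
  have hWF : |W ω - F ω| ≤ 1 + C :=
    (abs_sub _ _).trans (add_le_add (abs_le_one_of_eq_zero_or_eq_one (hW ω)) hω)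
  have hW₀₁ : 0 ≤ W ω ∧ W ω ≤ 1 := by rcases hW ω with h | h <;> simp [h]
  calc ‖drRho (W ω) (W ω - F ω)‖ ≤ (W ω - F ω) ^ 2 := abs_drRho_le hW₀₁.1 hW₀₁.2 _
    _ = |W ω - F ω| ^ 2 := (sq_abs _).symm
    _ ≤ (1 + C) ^ 2 := pow_le_pow_left₀ (abs_nonneg _) hWF 2

variable (hP : AEStronglyMeasurable P μ) (hP₁ : ∀ᵐ ω ∂μ, |P ω| ≤ 1)
include hP hP₁

lemma integrable_sub_mul_sub : Integrable (fun ω => (W ω - P ω) * (F ω - P ω)) μ := by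
  refine .of_bound ((hWm.sub hP).mul (hF.sub hP)) (2 * (C + 1)) ?_
  filter_upwards [hFC, hP₁] with ω hω hPω
  have hW₁ := abs_le_one_of_eq_zero_or_eq_one (hW ω)
  rw [Real.norm_eq_abs, abs_mul]
  exact mul_le_mul ((abs_sub _ _).trans (by linarith)) ((abs_sub _ _).trans (by linarith))
    (abs_nonneg _) zero_le_two

lemma integrable_drExcess : Integrable (fun ω => drExcess (W ω) (F ω) (P ω)) μ :=
  (((integrable_drRho_sub hWm hW hF hFC).sub (integrable_drRho_sub hWm hW hP hP₁)).add
    ((integrable_sub_mul_sub hWm hW hF hFC hP hP₁).const_mul 2)).congr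
    (drExcess_ae_eq hW (hP₁.mono fun _ h => (abs_le.1 h).2)).symm

lemma integral_drRho_sub_eq :
    ∫ ω, drRho (W ω) (W ω - F ω) ∂μ = ∫ ω, drRho (W ω) (W ω - P ω) ∂μ
      + ∫ ω, drExcess (W ω) (F ω) (P ω) ∂μ - 2 * ∫ ω, (W ω - P ω) * (F ω - P ω) ∂μ := by
  have hρF := integrable_drRho_sub hWm hW hF hFC
  have hρP := integrable_drRho_sub hWm hW hP hP₁
  have hc := integrable_sub_mul_sub hWm hW hF hFC hP hP₁
  have hsplit := integral_add (hρF.sub hρP) (hc.const_mul 2)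
  simp only [Pi.sub_apply] at hsplit
  rw [integral_congr_ae (drExcess_ae_eq hW (hP₁.mono fun _ h => (abs_le.1 h).2)), hsplit,
    integral_sub hρF hρP, integral_const_mul]
  ring

end LossIntegrals

section Orthogonality

variable {Ω ι : Type*} [Fintype ι] {m m0 : MeasurableSpace Ω} {μ : Measure Ω} [IsFiniteMeasure μ]

lemma integral_mul_sub_condExp_eq_zero (hm : m ≤ m0) {ψ Y : Ω → ℝ}
    (hψ : StronglyMeasurable[m] ψ) {C : ℝ} (hψC : ∀ᵐ ω ∂μ, |ψ ω| ≤ C) (hY : Integrable Y μ) :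
    ∫ ω, ψ ω * (Y ω - μ[Y|m] ω) ∂μ = 0 := by
  have hψ₀ : AEStronglyMeasurable ψ μ := (hψ.mono hm).aestronglyMeasurable
  have hsplit := integral_sub (hY.bdd_mul hψ₀ hψC)
    ((integrable_condExp (m := m) (f := Y)).bdd_mul hψ₀ hψC)
  simp only [← mul_sub] at hsplit
  rw [hsplit, ← integral_condExp hm]
  exact sub_eq_zero.2 (integral_congr_ae (condExp_stronglyMeasurable_mul_of_bound hm hψ hY C hψC))

lemma sum_condExp_ae_eq_sum (hm : m ≤ m0) {Y : ι → Ω → ℝ} (hY : ∀ i, Integrable (Y i) μ)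
    (hsum : Measurable[m] fun ω => ∑ i, Y i ω) :
    (fun ω => ∑ i, μ[Y i|m] ω) =ᵐ[μ] fun ω => ∑ i, Y i ω := by
  have hsum' : ∑ i, Y i = fun ω => ∑ i, Y i ω := by
    ext ω
    simp only [Finset.sum_apply]
  have h := condExp_finsetSum (μ := μ) (s := Finset.univ) (fun i _ => hY i) m
  rw [hsum', condExp_of_stronglyMeasurable hm hsum.stronglyMeasurable (by
    simpa only [hsum'] using integrable_finsetSum Finset.univ fun i _ => hY i)] at h
  filter_upwards [h] with ω hω
  simp only [hω, Finset.sum_apply]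

lemma sum_integral_sub_condExp_mul_eq_zero (hm : m ≤ m0) {Y : ι → Ω → ℝ}
    (hY : ∀ i, Integrable (Y i) μ) (hsum : Measurable[m] fun ω => ∑ i, Y i ω)
    {G : Ω → ℝ} (hG : AEStronglyMeasurable G μ) {ψ : ι → Ω → ℝ}
    (hψ : ∀ i, StronglyMeasurable[m] (ψ i)) {C : ℝ}
    (hGC : ∀ᵐ ω ∂μ, |G ω| ≤ C) (hψC : ∀ i, ∀ᵐ ω ∂μ, |ψ i ω| ≤ C) :
    ∑ i, ∫ ω, (Y i ω - μ[Y i|m] ω) * (G ω + ψ i ω) ∂μ = 0 := by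
  have hres : ∀ i, Integrable (fun ω => Y i ω - μ[Y i|m] ω) μ :=
    fun i => (hY i).sub integrable_condExp
  have hG_part : ∑ i, ∫ ω, (Y i ω - μ[Y i|m] ω) * G ω ∂μ = 0 := by
    rw [← integral_finsetSum _ fun i _ => (hres i).mul_bdd hG hGC]
    refine integral_eq_zero_of_ae ?_
    filter_upwards [sum_condExp_ae_eq_sum hm hY hsum] with ω hω
    simp only [← Finset.sum_mul, Finset.sum_sub_distrib, hω, sub_self, zero_mul, Pi.zero_apply]
  have hψ_part : ∀ i, ∫ ω, ψ i ω * (Y i ω - μ[Y i|m] ω) ∂μ = 0 :=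
    fun i => integral_mul_sub_condExp_eq_zero hm (hψ i) (hψC i) (hY i)
  calc ∑ i, ∫ ω, (Y i ω - μ[Y i|m] ω) * (G ω + ψ i ω) ∂μ
      = ∑ i, (∫ ω, (Y i ω - μ[Y i|m] ω) * G ω ∂μ
          + ∫ ω, ψ i ω * (Y i ω - μ[Y i|m] ω) ∂μ) := by
        refine Finset.sum_congr rfl fun i _ => ?_
        rw [← integral_add ((hres i).mul_bdd hG hGC)
          ((hres i).bdd_mul ((hψ i).mono hm).aestronglyMeasurable (hψC i))]
        congr 1
        ext ω
        ring
    _ = 0 := by simp only [hψ_part, add_zero, hG_part]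

end Orthogonality

lemma exists_measurable_abs_le_comp_ae_eq {Ω β : Type*} {m0 : MeasurableSpace Ω}
    {mβ : MeasurableSpace β} {μ : Measure Ω} {φ : Ω → β} {F : Ω → ℝ} (hF : Measurable[mβ.comap φ] F)
    {C : ℝ} (hC : 0 ≤ C) (hFC : ∀ᵐ ω ∂μ, |F ω| ≤ C) :
    ∃ H : β → ℝ, Measurable H ∧ (∀ y, |H y| ≤ C) ∧ (fun ω => H (φ ω)) =ᵐ[μ] F := by
  obtain ⟨H, hH, rfl⟩ := hF.exists_eq_measurable_comp
  refine ⟨fun y => max (-C) (min C (H y)), measurable_const.max (measurable_const.min hH),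
    fun y => abs_le.2 ⟨le_max_left _ _, max_le (by linarith) (min_le_left _ _)⟩, ?_⟩
  filter_upwards [hFC] with ω hω
  obtain ⟨h₁, h₂⟩ := abs_le.1 hω
  simp only [Function.comp_apply] at h₁ h₂ ⊢
  rw [min_eq_right h₂, max_eq_right h₁]

section Minimizer

variable {Ω ι : Type*} [Fintype ι] {m m0 : MeasurableSpace Ω} {μ : Measure Ω} [IsFiniteMeasure μ]

theorem integral_sum_drRho_condExp_lt (hm : m ≤ m0) {W : ι → Ω → ℝ}
    (hWm : ∀ i, Measurable (W i)) (hW : ∀ i ω, W i ω = 0 ∨ W i ω = 1)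
    (hsum : Measurable[m] fun ω => ∑ i, W i ω) (hlt : ∀ i, ∀ᵐ ω ∂μ, μ[W i|m] ω < 1)
    {G : Ω → ℝ} (hG : Measurable G) {H : ι → Ω → ℝ} (hH : ∀ i, Measurable[m] (H i)) {C : ℝ}
    (hGC : ∀ᵐ ω ∂μ, |G ω| ≤ C) (hHC : ∀ i, ∀ᵐ ω ∂μ, |H i ω| ≤ C)
    (hne : ¬ ∀ i, (fun ω => G ω + H i ω) =ᵐ[μ] μ[W i|m]) :
    ∫ ω, ∑ i, drRho (W i ω) (W i ω - μ[W i|m] ω) ∂μ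
      < ∫ ω, ∑ i, drRho (W i ω) (W i ω - (G ω + H i ω)) ∂μ := by
  have hWm' : ∀ i, AEStronglyMeasurable (W i) μ := fun i => (hWm i).aestronglyMeasurable
  have hW₁ : ∀ i, ∀ᵐ ω ∂μ, |W i ω| ≤ 1 :=
    fun i => ae_of_all _ fun ω => abs_le_one_of_eq_zero_or_eq_one (hW i ω)
  have hWint : ∀ i, Integrable (W i) μ := fun i => .of_bound (hWm' i) 1 (hW₁ i)
  have hP : ∀ i, AEStronglyMeasurable (μ[W i|m]) μ :=
    fun i => (stronglyMeasurable_condExp.mono hm).aestronglyMeasurable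
  have hP₁ : ∀ i, ∀ᵐ ω ∂μ, |μ[W i|m] ω| ≤ 1 := fun i => ae_bdd_abs_condExp_of_ae_bdd_abs (hW₁ i)
  have hF : ∀ i, AEStronglyMeasurable (fun ω => G ω + H i ω) μ :=
    fun i => hG.aestronglyMeasurable.add ((hH i).mono hm le_rfl).aestronglyMeasurable
  have hFC : ∀ i, ∀ᵐ ω ∂μ, |G ω + H i ω| ≤ C + C := fun i => by
    filter_upwards [hGC, hHC i] with ω hGω hHω
    exact (abs_add_le _ _).trans (add_le_add hGω hHω)
  have hcross : ∑ i, ∫ ω, (W i ω - μ[W i|m] ω) * (G ω + H i ω - μ[W i|m] ω) ∂μ = 0 := by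
    simp only [add_sub_assoc]
    refine sum_integral_sub_condExp_mul_eq_zero hm hWint hsum hG.aestronglyMeasurable
      (fun i => ((hH i).stronglyMeasurable.sub stronglyMeasurable_condExp)) (C := C + 1)
      (hGC.mono fun ω h => by linarith) fun i => ?_
    filter_upwards [hHC i, hP₁ i] with ω hHω hPω
    exact (abs_sub _ _).trans (add_le_add hHω hPω)
  have hexcess : 0 < ∑ i, ∫ ω, drExcess (W i ω) (G ω + H i ω) (μ[W i|m] ω) ∂μ := by
    obtain ⟨i₀, hi₀⟩ := not_forall.1 hne
    have hW₀ : ∀ i ω, 0 ≤ W i ω := fun i ω => by rcases hW i ω with h | h <;> simp [h]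
    refine Finset.sum_pos' (fun i _ => integral_nonneg_of_ae ?_) ⟨i₀, Finset.mem_univ _,
      integral_drExcess_pos (hW₀ i₀) (hlt i₀)
        (integrable_drExcess (hWm' i₀) (hW i₀) (hF i₀) (hFC i₀) (hP i₀) (hP₁ i₀)) hi₀⟩
    filter_upwards [hlt i] with ω hω
    exact drExcess_nonneg (hW₀ i ω) hω.le
  rw [integral_finsetSum _ fun i _ => integrable_drRho_sub (hWm' i) (hW i) (hP i) (hP₁ i),
    integral_finsetSum _ fun i _ => integrable_drRho_sub (hWm' i) (hW i) (hF i) (hFC i)]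
  have hsplit := fun i => integral_drRho_sub_eq (hWm' i) (hW i) (hF i) (hFC i) (hP i) (hP₁ i)
  simp only [hsplit, Finset.sum_sub_distrib, Finset.sum_add_distrib, ← Finset.mul_sum, hcross]
  linarith

end Minimizer

theorem conditional_mean_unique_minimizer_general
    {Ωs 𝒳 𝕊 : Type*} [MeasurableSpace Ωs] [MeasurableSpace 𝒳] [MeasurableSpace 𝕊]
    (μ : Measure Ωs) [IsProbabilityMeasure μ]
    (T : ℕ)
    (W : Ωs → Fin T → ℝ) (hWmeas : Measurable W)
    (hW01 : ∀ ω t, W ω t = 0 ∨ W ω t = 1)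
    (X : Ωs → 𝒳) (hX : Measurable X)
    (S : Ωs → 𝕊) (hS : Measurable S)
    -- W̄ is 𝒢 = σ(S,X)-measurable
    (hWbar : @Measurable Ωs ℝ
      (MeasurableSpace.comap (fun ω => (S ω, X ω)) inferInstance) _
      (fun ω => (1 / (T : ℝ)) * ∑ t, W ω t))
    (η : ℝ) (hη : 0 < η)
    -- f*_t = E[W_t | 𝒢] ≤ 1 − η a.s.
    (hbdd : ∀ t, ∀ᵐ ω ∂μ,
      (μ[(fun ω' => W ω' t) |
        MeasurableSpace.comap (fun ω'' => (S ω'', X ω'')) inferInstance]) ω ≤ 1 - η) :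
    -- f* belongs to 𝓕 (up to a.e. equality)
    (∃ (g : (Fin T → ℝ) × 𝒳 → ℝ) (h : Fin T → 𝕊 × 𝒳 → ℝ) (C : ℝ),
        Measurable g ∧ (∀ t, Measurable (h t)) ∧
        (∀ x, |g x| ≤ C) ∧ (∀ t x, |h t x| ≤ C) ∧
        (∀ t, (fun ω => g (W ω, X ω) + h t (S ω, X ω)) =ᵐ[μ]
          μ[(fun ω' => W ω' t) |
            MeasurableSpace.comap (fun ω'' => (S ω'', X ω'')) inferInstance])) ∧
    -- and f* is the unique minimizer of R over 𝓕
    (∀ f : Fin T → Ωs → ℝ,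
      (∃ (g : (Fin T → ℝ) × 𝒳 → ℝ) (h : Fin T → 𝕊 × 𝒳 → ℝ) (C : ℝ),
        Measurable g ∧ (∀ t, Measurable (h t)) ∧
        (∀ x, |g x| ≤ C) ∧ (∀ t x, |h t x| ≤ C) ∧
        (∀ t ω, f t ω = g (W ω, X ω) + h t (S ω, X ω))) →
      ¬ (∀ t, f t =ᵐ[μ]
          μ[(fun ω' => W ω' t) |
            MeasurableSpace.comap (fun ω'' => (S ω'', X ω'')) inferInstance]) →
      ∫ ω, (1 / (T : ℝ)) * ∑ t,
          drRho (W ω t) (W ω t -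
            (μ[(fun ω' => W ω' t) |
              MeasurableSpace.comap (fun ω'' => (S ω'', X ω'')) inferInstance]) ω) ∂μ
        < ∫ ω, (1 / (T : ℝ)) * ∑ t, drRho (W ω t) (W ω t - f t ω) ∂μ) := by
  have hm : MeasurableSpace.comap (fun ω => (S ω, X ω)) inferInstance ≤ ‹MeasurableSpace Ωs› :=
    (hS.prodMk hX).comap_le
  have hW₁ : ∀ t, ∀ᵐ ω ∂μ, |W ω t| ≤ 1 :=
    fun t => ae_of_all _ fun ω => abs_le_one_of_eq_zero_or_eq_one (hW01 ω t)
  constructor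
  · choose h hh hhC hhf using fun t => exists_measurable_abs_le_comp_ae_eq
      (stronglyMeasurable_condExp (f := fun ω => W ω t) (μ := μ)).measurable zero_le_one
      (ae_bdd_abs_condExp_of_ae_bdd_abs (hW₁ t))
    exact ⟨0, h, 1, measurable_const, hh, fun _ => by simp, hhC, fun t => by simpa using hhf t⟩
  rintro f ⟨g, h, C, hg, hh, hgC, hhC, hf⟩ hne
  obtain rfl : f = fun t ω => g (W ω, X ω) + h t (S ω, X ω) := funext fun t => funext (hf t)
  obtain ⟨t₀, -⟩ := not_forall.1 hne
  have hT : (0 : ℝ) < T := Nat.cast_pos.2 t₀.pos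
  have hsum : Measurable[MeasurableSpace.comap (fun ω => (S ω, X ω)) inferInstance]
      fun ω => ∑ t, W ω t := by
    convert hWbar.const_mul (T : ℝ) using 2 with ω
    field_simp [hT.ne']
  rw [integral_const_mul, integral_const_mul]
  exact mul_lt_mul_of_pos_left (integral_sum_drRho_condExp_lt hm (fun t => by fun_prop)
    (fun t ω => hW01 ω t) hsum (fun t => (hbdd t).mono fun ω h => by linarith)
    (hg.comp (hWmeas.prodMk hX)) (fun t => (hh t).comp (comap_measurable _))
    (ae_of_all _ fun _ => hgC _) (fun t => ae_of_all _ fun _ => hhC t _) hne) (by positivity)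

/-- **The conditional mean is the unique minimizer of the population loss.**
With `𝒢 = σ(S, X)`, `f*_t = E[W_t | 𝒢]` and `f*_t ≤ 1 − η` a.s., the vector
`f*` belongs (up to a.e. equality) to the class `𝓕` of processes of the form
`f_t = g(W,X) + h_t(S,X)` with bounded measurable `g, h_t`, and it is the
unique minimizer of `R(f) = E[(1/T)·Σ_t ρ_{W_t}(W_t − f_t)]` over `𝓕`:
`R(f) > R(f*)` for every `f ∈ 𝓕` differing from `f*` on a set of positive
probability. -/
theorem conditional_mean_unique_minimizer
    {Ωs 𝒳 𝕊 : Type*} [MeasurableSpace Ωs] [MeasurableSpace 𝒳] [MeasurableSpace 𝕊]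
    (μ : Measure Ωs) [IsProbabilityMeasure μ]
    (T : ℕ) (hT : 0 < T)
    (W : Ωs → Fin T → ℝ) (hWmeas : Measurable W)
    (hW01 : ∀ ω t, W ω t = 0 ∨ W ω t = 1)
    (X : Ωs → 𝒳) (hX : Measurable X)
    (S : Ωs → 𝕊) (hS : Measurable S)
    -- S is a statistic of (W, X)
    (hSstat : @Measurable Ωs 𝕊
      (MeasurableSpace.comap (fun ω => (W ω, X ω)) inferInstance) _ S)
    -- W̄ is 𝒢 = σ(S,X)-measurable
    (hWbar : @Measurable Ωs ℝ
      (MeasurableSpace.comap (fun ω => (S ω, X ω)) inferInstance) _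
      (fun ω => (1 / (T : ℝ)) * ∑ t, W ω t))
    (η : ℝ) (hη : 0 < η)
    -- f*_t = E[W_t | 𝒢] ≤ 1 − η a.s.
    (hbdd : ∀ t, ∀ᵐ ω ∂μ,
      (μ[(fun ω' => W ω' t) |
        MeasurableSpace.comap (fun ω'' => (S ω'', X ω'')) inferInstance]) ω ≤ 1 - η) :
    -- f* belongs to 𝓕 (up to a.e. equality)
    (∃ (g : (Fin T → ℝ) × 𝒳 → ℝ) (h : Fin T → 𝕊 × 𝒳 → ℝ) (C : ℝ),
        Measurable g ∧ (∀ t, Measurable (h t)) ∧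
        (∀ x, |g x| ≤ C) ∧ (∀ t x, |h t x| ≤ C) ∧
        (∀ t, (fun ω => g (W ω, X ω) + h t (S ω, X ω)) =ᵐ[μ]
          μ[(fun ω' => W ω' t) |
            MeasurableSpace.comap (fun ω'' => (S ω'', X ω'')) inferInstance])) ∧
    -- and f* is the unique minimizer of R over 𝓕
    (∀ f : Fin T → Ωs → ℝ,
      (∃ (g : (Fin T → ℝ) × 𝒳 → ℝ) (h : Fin T → 𝕊 × 𝒳 → ℝ) (C : ℝ),
        Measurable g ∧ (∀ t, Measurable (h t)) ∧
        (∀ x, |g x| ≤ C) ∧ (∀ t x, |h t x| ≤ C) ∧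
        (∀ t ω, f t ω = g (W ω, X ω) + h t (S ω, X ω))) →
      ¬ (∀ t, f t =ᵐ[μ]
          μ[(fun ω' => W ω' t) |
            MeasurableSpace.comap (fun ω'' => (S ω'', X ω'')) inferInstance]) →
      ∫ ω, (1 / (T : ℝ)) * ∑ t,
          drRho (W ω t) (W ω t -
            (μ[(fun ω' => W ω' t) |
              MeasurableSpace.comap (fun ω'' => (S ω'', X ω'')) inferInstance]) ω) ∂μ
        < ∫ ω, (1 / (T : ℝ)) * ∑ t, drRho (W ω t) (W ω t - f t ω) ∂μ) :=
  conditional_mean_unique_minimizer_general μ T W hWmeas hW01 X hX S hS hWbar η hη hbdd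
end
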